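/- arXiv:2308.12070 — 8 statements merged into one kernel-verified Lean document; each statement's English description precedes it below -/
import Mathlib

section
/- If Π ∈ B(A) is an idempotent (skew projection), then its image Im Π is an orthogonally complementable closed submodule of A; consequently every closed complementable submodule of A is orthogonally complementable. -/
variable {A : Type*}

/-- An orthogonal projection in a C*-algebra. -/
def IsProjectionElem [CStarAlgebra A] (p : A) : Prop := IsSelfAdjoint p ∧ p * p = p

/-- Murray–von Neumann equivalence of projections: `p ∼ q`. -/
def MvNEquiv [CStarAlgebra A] (p q : A) : Prop := ∃ v : A, v * star v = p ∧ star v * v = q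

/-- Murray–von Neumann subequivalence `p ⪯ q`: `p` is equivalent to a
subprojection of `q`. -/
def MvNSubEquiv [CStarAlgebra A] (p q : A) : Prop :=
  ∃ p' : A, IsProjectionElem p' ∧ p' * q = p' ∧ q * p' = p' ∧ MvNEquiv p p'

/-- `a` is invertible up to the pair of projections `(p, q)`. -/
def InvertibleUpTo [CStarAlgebra A] (a p q : A) : Prop :=
  ∃ b : A, (1 - q) * a * (1 - p) * b = 1 - q ∧ b * ((1 - q) * a * (1 - p)) = 1 - p

/-- An ideal of finite type elements in a unital C*-algebra `A`
(Kečkić–Lazović): a selfadjoint (two-sided, complex-linear) ideal possessing an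
approximate unit of projections, and such that for any two projections `p, q`
in the ideal there is `v` with `v v* = q` and `v* v ⊥ p`. -/
structure FiniteTypeIdeal (A : Type*) [CStarAlgebra A] where
  carrier : Set A
  zero_mem : (0 : A) ∈ carrier
  add_mem : ∀ {a b : A}, a ∈ carrier → b ∈ carrier → a + b ∈ carrier
  smul_mem : ∀ (c : ℂ) {a : A}, a ∈ carrier → c • a ∈ carrier
  mul_mem_left : ∀ (a : A) {b : A}, b ∈ carrier → a * b ∈ carrier
  mul_mem_right : ∀ (a : A) {b : A}, b ∈ carrier → b * a ∈ carrier
  star_mem : ∀ {a : A}, a ∈ carrier → star a ∈ carrier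
  approx_unit : ∀ {a : A}, a ∈ carrier → ∀ ε : ℝ, 0 < ε →
    ∃ p ∈ carrier, IsProjectionElem p ∧ ‖a * p - a‖ < ε ∧ ‖p * a - a‖ < ε
  exchange : ∀ {p q : A}, p ∈ carrier → q ∈ carrier →
    IsProjectionElem p → IsProjectionElem q →
    ∃ v : A, v * star v = q ∧ IsProjectionElem (star v * v + p)

variable [CStarAlgebra A]

/-- The orthogonal complement of a subset of `A`, viewed as a Hilbert
`A`-module over itself with inner product `⟪x, y⟫ = x* y`. -/
def OrthoComplement (S : Set A) : Set A := {x : A | ∀ n ∈ S, star n * x = 0}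

/-- A subset (submodule) of `A` is orthogonally complementable if every element
of `A` decomposes as a sum of an element of `S` and an element of `S^⊥`. -/
def IsOrthoComplementable (S : Set A) : Prop :=
  ∀ x : A, ∃ n ∈ S, ∃ m ∈ OrthoComplement S, x = n + m

/-- A closed submodule `N` of `A` is (topologically) complementable if there is
a closed submodule `L` with `N ⊓ L = 0` and `N + L = A`. -/
def IsComplementable (N : Submodule Aᵐᵒᵖ A) : Prop :=
  ∃ L : Submodule Aᵐᵒᵖ A, IsClosed (L : Set A) ∧ N ⊓ L = ⊥ ∧ N ⊔ L = ⊤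

/-- An orthogonal projection in `B(A)`: an idempotent which is self-adjoint
with respect to the `A`-valued inner product. -/
def IsOrthogonalProjectionOp (P : A →L[Aᵐᵒᵖ] A) : Prop :=
  P * P = P ∧ ∀ x y : A, star (P x) * y = star x * P y

/-- Invertibility of `F ∈ B(A)` up to a pair of projections `(P, Q)`. -/
def OpInvertibleUpTo (F P Q : A →L[Aᵐᵒᵖ] A) : Prop :=
  ∃ D : A →L[Aᵐᵒᵖ] A,
    (1 - Q) * F * (1 - P) * D = 1 - Q ∧ D * ((1 - Q) * F * (1 - P)) = 1 - P


lemma my_isUnit_one_add_star_mul_self (a : A) : IsUnit (1 + star a * a) := by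
  have h : (-1 : ℝ) ∉ spectrum ℝ (star a * a) := fun hmem =>
    absurd (spectrum_star_mul_self_nonneg (-1) hmem) (by norm_num)
  rw [spectrum.notMem_iff] at h
  have heq : algebraMap ℝ A (-1) - star a * a = -(1 + star a * a) := by
    simp [map_neg]; noncomm_ring
  rw [heq] at h
  exact (IsUnit.neg_iff _).mp h

lemma exists_ortho_proj_aux (e : A) (he : e * e = e) :
    ∃ p : A, e * p = p ∧ star e * p = star e := by
  set f := star e with hf
  have hff : f * f = f := by rw [hf, ← star_mul, he]
  have hzu : IsUnit (1 + star (f - e) * (f - e)) := my_isUnit_one_add_star_mul_self _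
  obtain ⟨u, hu⟩ := hzu
  refine ⟨e * f * ↑u⁻¹, by rw [← mul_assoc, ← mul_assoc, he], ?_⟩
  have hse : star (f - e) = e - f := by simp [hf]
  have key : f * (e * f) = f * ↑u := by
    rw [hu, hse]
    have expand : f * (1 + (e - f) * (f - e)) =
        f + f * (e * f) - f * (e * e) - (f * f) * f + (f * f) * e := by noncomm_ring
    rw [expand, he, hff, hff]
    abel
  calc f * (e * f * ↑u⁻¹) = f * (e * f) * ↑u⁻¹ := by noncomm_ring
    _ = f * ↑u * ↑u⁻¹ := by rw [key]
    _ = f * (↑u * ↑u⁻¹) := by rw [mul_assoc]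
    _ = f := by rw [Units.mul_inv, mul_one]

lemma ortho_of_idem (e : A) (he : e * e = e) (S : Set A)
    (hmem : ∀ x : A, e * x ∈ S) (hfix : ∀ n ∈ S, e * n = n) :
    IsOrthoComplementable S := by
  obtain ⟨p, hep, hfp⟩ := exists_ortho_proj_aux e he
  intro x
  have hperp : star e * (x - p * x) = 0 := by
    rw [mul_sub, ← mul_assoc, hfp, sub_self]
  refine ⟨p * x, ?_, x - p * x, ?_, by abel⟩
  · have h := hmem (p * x)
    rwa [← mul_assoc, hep] at h
  · intro n hn
    rw [← hfix n hn, star_mul, mul_assoc, hperp, mul_zero]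

/-- Remark 1.4 of [IS10]: the image of an idempotent (skew projection)
`Prj ∈ B(A)` is a closed, orthogonally complementable submodule of `A`;
consequently, every closed complementable submodule of `A` is orthogonally
complementable. -/
theorem range_of_idempotent_orthoComplementable :
    (∀ Prj : A →L[Aᵐᵒᵖ] A, Prj * Prj = Prj →
      IsClosed (Set.range ⇑Prj) ∧ IsOrthoComplementable (Set.range ⇑Prj)) ∧
    (∀ N : Submodule Aᵐᵒᵖ A, IsClosed (N : Set A) → IsComplementable N →
      IsOrthoComplementable (N : Set A)) := by
  constructor
  · intro Prj hP
    obtain ⟨e, he_def⟩ : ∃ e : A, Prj 1 = e := ⟨_, rfl⟩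
    have hPx : ∀ x : A, Prj x = e * x := by
      intro x
      have h1 : Prj x = Prj (MulOpposite.op x • (1 : A)) := by
        rw [op_smul_eq_mul, one_mul]
      rw [h1, map_smul, op_smul_eq_mul, he_def]
    have hPP : ∀ x : A, Prj (Prj x) = Prj x := fun x =>
      DFunLike.congr_fun hP x
    have he : e * e = e := by
      have h := hPP 1
      rwa [hPx (Prj 1), hPx 1, mul_one] at h
    have hrange : Set.range ⇑Prj = {y : A | e * y = y} := by
      ext y
      constructor
      · rintro ⟨x, rfl⟩
        have := hPP x
        rw [hPx (Prj x)] at this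
        exact this
      · intro hy
        exact ⟨y, by rw [hPx y]; exact hy⟩
    constructor
    · rw [hrange]
      exact isClosed_eq (by fun_prop) continuous_id
    · refine ortho_of_idem e he _ (fun x => ⟨x, hPx x⟩) ?_
      intro n hn
      rw [hrange] at hn
      exact hn
  · intro N _ hN
    obtain ⟨L, _, hinf, hsup⟩ := hN
    have h1 : (1 : A) ∈ N ⊔ L := hsup ▸ Submodule.mem_top
    obtain ⟨n₀, hn₀, l₀, hl₀, hsum⟩ := Submodule.mem_sup.mp h1
    have hmem : ∀ x : A, n₀ * x ∈ N := by
      intro x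
      have : MulOpposite.op x • n₀ ∈ N := N.smul_mem _ hn₀
      rwa [op_smul_eq_mul] at this
    have hfix : ∀ x ∈ N, n₀ * x = x := by
      intro x hx
      have hl : x - n₀ * x = l₀ * x := by
        have h : (n₀ + l₀) * x = x := by rw [hsum, one_mul]
        rw [add_mul] at h
        exact sub_eq_of_eq_add' h.symm
      have hmemL : x - n₀ * x ∈ L := by
        rw [hl]
        have : MulOpposite.op x • l₀ ∈ L := L.smul_mem _ hl₀
        rwa [op_smul_eq_mul] at this
      have hmemN : x - n₀ * x ∈ N := N.sub_mem hx (hmem x)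
      have : x - n₀ * x ∈ N ⊓ L := ⟨hmemN, hmemL⟩
      rw [hinf, Submodule.mem_bot] at this
      exact (sub_eq_zero.mp this).symm
    exact ortho_of_idem n₀ (hfix n₀ hn₀) _ hmem hfix
end

section
/- An operator F ∈ B(A) has closed image if and only if there exist orthogonal projections P, Q ∈ B(A) such that (I-Q)F(I-P) = F and F is invertible up to (P,Q); in this case necessarily P is the orthogonal projection onto ker F and Q is the orthogonal projection onto (Im F)^⊥. -/
/-!
Every `F ∈ B(A)` is left multiplication by `f = F 1`. If `F` has closed range, the open mapping
theorem gives preimages `f x = f a` with `‖x‖ ≤ C ‖f a‖`, and this forces a spectral gap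
`σ(f* f) ⊆ {0} ∪ [δ, ∞)`: for a spectral value `0 < λ < δ`, a bump function at `λ` gives
`a = φ(f* f)` with `‖a‖ ≥ 1` and `‖f a‖² ≤ 3λ/2`, while `φ` vanishing near `0` makes
`a = ψ(f* f) f* f x` for any `x` with `f x = f a`, so that `‖a‖ ≤ C ‖f a‖`.
Inverting `f* f` on `[δ, ∞)` by functional
calculus gives a self-adjoint `k` with `f* f k f* f = f* f`, so `g = k f*` satisfies `f g f = f`
with `f g`, `g f` self-adjoint, and `P = 1 - g f`, `Q = 1 - f g`, `D = g` do the job.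
Conversely, `(I-Q)F(I-P) = F` and `FD = I-Q` give `Im F = ker Q`, which is closed; the
identification of `Im P` and `Im Q` is then algebra with the `A`-valued inner product.
-/

variable {A : Type*}

variable [CStarAlgebra A]

section OperatorIdentities

variable {R M : Type*} [Ring R] [AddCommGroup M] [Module R M] [TopologicalSpace M]

theorem ContinuousLinearMap.range_eq_setOf_apply_eq_zero [IsTopologicalAddGroup M]
    {F D Q : M →L[R] M} (hQF : Q * F = 0) (hFD : F * D = 1 - Q) : Set.range F = {x | Q x = 0} := by
  ext x
  simp only [Set.mem_range, Set.mem_ofPred_eq]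
  refine ⟨?_, fun hx => ⟨D x, ?_⟩⟩
  · rintro ⟨y, rfl⟩
    exact congr($hQF y)
  · simpa [hx] using congr($hFD x)

theorem IsIdempotentElem.range_eq_setOf_one_sub_apply_eq_zero [IsTopologicalAddGroup M]
    {P : M →L[R] M} (hP : IsIdempotentElem P) : Set.range P = {x | (1 - P) x = 0} :=
  ContinuousLinearMap.range_eq_setOf_apply_eq_zero (D := 1) hP.one_sub_mul_self
    (by rw [mul_one, sub_sub_cancel])

theorem ContinuousLinearMap.setOf_apply_eq_zero_eq {F D E : M →L[R] M}
    (hFE : F * E = F) (hDF : D * F = E) : {x | F x = 0} = {x | E x = 0} := by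
  ext x
  simp only [Set.mem_ofPred_eq]
  constructor
  · intro hx
    simpa [hx] using congr($hDF x).symm
  · intro hx
    simpa [hx] using congr($hFE x).symm

end OperatorIdentities

theorem IsOrthogonalProjectionOp.isIdempotentElem {P : A →L[Aᵐᵒᵖ] A}
    (hP : IsOrthogonalProjectionOp P) : IsIdempotentElem P :=
  hP.1

theorem IsOrthogonalProjectionOp.orthoComplement_setOf_apply_eq_zero {Q : A →L[Aᵐᵒᵖ] A}
    (hQ : IsOrthogonalProjectionOp Q) : OrthoComplement {x | Q x = 0} = Set.range Q := by
  rw [hQ.isIdempotentElem.range_eq_setOf_one_sub_apply_eq_zero]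
  ext x
  refine ⟨fun hx => ?_, fun hx n hn => ?_⟩
  · have hker : Q ((1 - Q) x) = 0 := congr($(hQ.isIdempotentElem.mul_one_sub_self) x)
    have hQx : star ((1 - Q) x) * Q x = 0 := by rw [← hQ.2, hker, star_zero, zero_mul]
    show (1 - Q) x = 0
    rw [← CStarRing.star_mul_self_eq_zero_iff]
    calc star ((1 - Q) x) * (1 - Q) x = star ((1 - Q) x) * x - star ((1 - Q) x) * Q x :=
          mul_sub _ x (Q x)
      _ = 0 := by rw [hx _ hker, hQx, sub_zero]
  · have hx : x = Q x := by simpa [sub_eq_zero] using hx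
    rw [hx, ← hQ.2, hn, star_zero, zero_mul]

noncomputable def mulLeftCLM : A →+* (A →L[Aᵐᵒᵖ] A) where
  toFun a :=
    { toFun := (a * ·)
      map_add' := mul_add a
      map_smul' := fun m x => (mul_assoc a x m.unop).symm
      cont := continuous_const_mul a }
  map_one' := by ext; simp
  map_mul' a b := by ext; simp [mul_assoc]
  map_zero' := by ext; simp
  map_add' a b := by ext; simp [add_mul]

@[simp] theorem mulLeftCLM_apply (a x : A) : mulLeftCLM a x = a * x := rfl

theorem one_sub_mulLeftCLM (a : A) : 1 - mulLeftCLM a = mulLeftCLM (1 - a) := by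
  rw [map_sub, map_one]

theorem ContinuousLinearMap.apply_eq_apply_one_mul (F : A →L[Aᵐᵒᵖ] A) (x : A) :
    F x = F 1 * x := by
  simpa using F.map_smul (MulOpposite.op x) 1

theorem mulLeftCLM_apply_one (F : A →L[Aᵐᵒᵖ] A) : mulLeftCLM (F 1) = F :=
  ContinuousLinearMap.ext fun x => (F.apply_eq_apply_one_mul x).symm

theorem IsStarProjection.isOrthogonalProjectionOp_mulLeftCLM {p : A} (hp : IsStarProjection p) :
    IsOrthogonalProjectionOp (mulLeftCLM p) :=
  ⟨by rw [← map_mul, hp.isIdempotentElem.eq], fun x y => by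
    simp [star_mul, hp.isSelfAdjoint.star_eq, mul_assoc]⟩

theorem ContinuousLinearMap.exists_preimage_norm_le_of_isClosed_range {𝕜 E F : Type*}
    [NontriviallyNormedField 𝕜] [NormedAddCommGroup E] [NormedSpace 𝕜 E] [CompleteSpace E]
    [NormedAddCommGroup F] [NormedSpace 𝕜 F] [CompleteSpace F] (f : E →L[𝕜] F)
    (hf : IsClosed (Set.range f)) : ∃ C > 0, ∀ x, ∃ x', f x' = f x ∧ ‖x'‖ ≤ C * ‖f x‖ := by
  let N := LinearMap.range (f : E →ₗ[𝕜] F)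
  have : CompleteSpace N :=
    IsClosed.completeSpace_coe (hs := by rw [LinearMap.coe_range]; exact hf)
  obtain ⟨C, hC, hpre⟩ := (f.codRestrict N (LinearMap.mem_range_self (f : E →ₗ[𝕜] F))
    |>.exists_preimage_norm_le fun ⟨_, x, hx⟩ => ⟨x, Subtype.ext hx⟩)
  refine ⟨C, hC, fun x => ?_⟩
  obtain ⟨x', hx', hnorm⟩ := hpre ⟨f x, LinearMap.mem_range_self (f : E →ₗ[𝕜] F) x⟩
  exact ⟨x', congr($hx'.1), hnorm⟩

theorem norm_cfc_le_norm_of_mul_eq {f x : A} {φ : ℝ → ℝ} {μ : ℝ} (hμ : 0 < μ)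
    (hφ : Continuous φ) (hφμ : ∀ t ≤ μ, φ t = 0) (hx : f * x = f * cfc φ (star f * f)) :
    ‖cfc φ (star f * f)‖ ≤ ‖x‖ := by
  set T := star f * f
  set ψ : ℝ → ℝ := fun t => (max t μ)⁻¹
  have hψ : Continuous ψ :=
    (continuous_id.max continuous_const).inv₀ fun t => (hμ.trans_le (le_max_right t μ)).ne'
  have hφ_eq : cfc φ T = cfc (fun t => ψ t * t) T * x := by
    calc cfc φ T = cfc (fun t => ψ t * t * φ t) T := cfc_congr fun t _ => by
          rcases le_or_gt t μ with ht | ht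
          · simp [hφμ t ht]
          · simp [ψ, max_eq_left ht.le, inv_mul_cancel₀ (hμ.trans ht).ne']
      _ = cfc ψ T * star f * (f * cfc φ T) := by
          rw [cfc_mul (fun t => ψ t * t) φ T (hψ.mul continuous_id).continuousOn
            hφ.continuousOn, cfc_mul ψ (fun t => t) T hψ.continuousOn continuousOn_id,
            cfc_id' ℝ T]
          simp only [T, mul_assoc]
      _ = cfc (fun t => ψ t * t) T * x := by
          rw [← hx, cfc_mul ψ (fun t => t) T hψ.continuousOn continuousOn_id, cfc_id' ℝ T]
          simp only [T, mul_assoc]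
  have hψ_le : ‖cfc (fun t => ψ t * t) T‖ ≤ 1 := by
    refine norm_cfc_le zero_le_one fun t ht => ?_
    have ht0 : 0 ≤ t := spectrum_star_mul_self_nonneg t ht
    rw [Real.norm_of_nonneg (by positivity), inv_mul_le_iff₀ (hμ.trans_le (le_max_right t μ)),
      mul_one]
    exact le_max_left t μ
  calc ‖cfc φ T‖ ≤ ‖cfc (fun t => ψ t * t) T‖ * ‖x‖ := hφ_eq ▸ norm_mul_le _ _
    _ ≤ ‖x‖ := mul_le_of_le_one_left (norm_nonneg x) hψ_le

theorem sq_norm_mul_cfc_star_mul_self (f : A) {φ : ℝ → ℝ} (hφ : Continuous φ) :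
    ‖f * cfc φ (star f * f)‖ ^ 2 = ‖cfc (fun s => φ s * s * φ s) (star f * f)‖ := by
  set T := star f * f
  rw [sq, ← CStarRing.norm_star_mul_self, star_mul, (cfc_predicate φ T).star_eq,
    cfc_mul (fun s => φ s * s) φ T (hφ.mul continuous_id).continuousOn hφ.continuousOn,
    cfc_mul φ (fun s => s) T hφ.continuousOn continuousOn_id, cfc_id' ℝ T]
  simp only [T, mul_assoc]

theorem spectrum_star_mul_self_eq_zero_or_le {f : A} {C : ℝ}
    (hC : ∀ a, ∃ x, f * x = f * a ∧ ‖x‖ ≤ C * ‖f * a‖) {t : ℝ}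
    (ht : t ∈ spectrum ℝ (star f * f)) : t = 0 ∨ 2 / (3 * C ^ 2) ≤ t := by
  rcases (spectrum_star_mul_self_nonneg t ht).eq_or_lt with rfl | ht0
  · exact .inl rfl
  right
  set T := star f * f
  set φ : ℝ → ℝ := fun s => max 0 (1 - 2 * |s - t| / t)
  have hφ : Continuous φ := by fun_prop
  have hφ_nonneg : ∀ s, 0 ≤ φ s := fun s => le_max_left _ _
  have hφ_le_one : ∀ s, φ s ≤ 1 := fun s => max_le zero_le_one (by
    have : 0 ≤ 2 * |s - t| / t := by positivity
    linarith)
  have hφ_eq_zero : ∀ s, t / 2 ≤ |s - t| → φ s = 0 := fun s hs =>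
    max_eq_left (sub_nonpos.2 ((le_div_iff₀ ht0).2 (by linarith)))
  set a := cfc φ T
  have ha : 1 ≤ ‖a‖ := by simpa [φ] using norm_apply_le_norm_cfc φ T ht
  have hfa : ‖f * a‖ ^ 2 ≤ 3 * t / 2 := by
    rw [sq_norm_mul_cfc_star_mul_self f hφ]
    refine norm_cfc_le (by positivity) fun s hs => ?_
    rcases le_or_gt (t / 2) |s - t| with hst | hst
    · rw [hφ_eq_zero s hst, zero_mul, zero_mul, norm_zero]
      positivity
    · have hs0 : 0 ≤ s := spectrum_star_mul_self_nonneg s hs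
      have hs1 : s ≤ 3 * t / 2 := by linarith [le_abs_self (s - t)]
      rw [Real.norm_of_nonneg (by have := hφ_nonneg s; positivity)]
      nlinarith [hφ_nonneg s, mul_le_one₀ (hφ_le_one s) (hφ_nonneg s) (hφ_le_one s)]
  obtain ⟨x, hx, hxC⟩ := hC a
  have hax : ‖a‖ ≤ ‖x‖ := norm_cfc_le_norm_of_mul_eq (half_pos ht0) hφ (fun s hs =>
    hφ_eq_zero s (by rw [abs_sub_comm]; exact le_trans (by linarith) (le_abs_self _))) hx
  have hCfa : 1 ≤ C * ‖f * a‖ := ha.trans (hax.trans hxC)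
  have hCt : 1 ≤ C ^ 2 * (3 * t / 2) := by nlinarith [sq_nonneg C]
  rw [div_le_iff₀ (by nlinarith [sq_nonneg C])]
  linarith

theorem IsSelfAdjoint.exists_mul_mul_self_eq {T : A} (hT : IsSelfAdjoint T) {δ : ℝ}
    (hδ : 0 < δ) (hgap : ∀ t ∈ spectrum ℝ T, t = 0 ∨ δ ≤ t) :
    ∃ k, IsSelfAdjoint k ∧ Commute k T ∧ T * k * T = T := by
  set h : ℝ → ℝ := fun t => (max t δ)⁻¹
  have hh : Continuous h :=
    (continuous_id.max continuous_const).inv₀ fun t => (hδ.trans_le (le_max_right t δ)).ne'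
  refine ⟨cfc h T, cfc_predicate h T, (Commute.refl T).cfc_real h, ?_⟩
  calc T * cfc h T * T = cfc (fun t => t * h t * t) T := by
        rw [cfc_mul (fun t => t * h t) (fun t => t) T (continuous_id.mul hh).continuousOn
          continuousOn_id, cfc_mul (fun t => t) h T continuousOn_id hh.continuousOn,
          cfc_id' ℝ T]
    _ = cfc (fun t => t) T := cfc_congr fun t ht => by
        rcases hgap t ht with rfl | hδt
        · simp
        · simp [h, max_eq_left hδt, (hδ.trans_le hδt).ne']
    _ = T := cfc_id' ℝ T

theorem exists_isSelfAdjoint_mul_mul_eq_of_isClosed_range {f : A}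
    (hf : IsClosed (Set.range (f * ·))) :
    ∃ g, IsSelfAdjoint (f * g) ∧ IsSelfAdjoint (g * f) ∧ f * g * f = f := by
  obtain ⟨C, hC0, hC⟩ :=
    (ContinuousLinearMap.mul ℂ A f).exists_preimage_norm_le_of_isClosed_range hf
  obtain ⟨k, hk, hkT, hTkT⟩ := (IsSelfAdjoint.star_mul_self f).exists_mul_mul_self_eq
    (δ := 2 / (3 * C ^ 2)) (by positivity) fun t ht => spectrum_star_mul_self_eq_zero_or_le hC ht
  refine ⟨k * star f, by simpa only [mul_assoc] using hk.conjugate f, ?_, ?_⟩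
  · rw [mul_assoc]
    exact (hk.commute_iff (.star_mul_self f)).1 hkT
  · have hker : f * (1 - k * (star f * f)) = 0 := by
      rw [← CStarRing.star_mul_self_eq_zero_iff]
      calc star (f * (1 - k * (star f * f))) * (f * (1 - k * (star f * f)))
          = ((1 - star f * f * k) * (star f * f)) * (1 - k * (star f * f)) := by
            simp only [star_mul, star_sub, star_one, star_star, hk.star_eq]
            noncomm_ring
        _ = 0 := by rw [sub_mul, one_mul, hTkT, sub_self, zero_mul]
    rw [mul_sub, mul_one, sub_eq_zero] at hker
    simpa only [mul_assoc] using hker.symm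

theorem exists_mulLeftCLM_invertibleUpTo {f g : A} (hfg : IsSelfAdjoint (f * g))
    (hgf : IsSelfAdjoint (g * f)) (hfgf : f * g * f = f) :
    ∃ P Q : A →L[Aᵐᵒᵖ] A, IsOrthogonalProjectionOp P ∧ IsOrthogonalProjectionOp Q ∧
      (1 - Q) * mulLeftCLM f * (1 - P) = mulLeftCLM f ∧
      OpInvertibleUpTo (mulLeftCLM f) P Q := by
  have hfgf' : f * (g * f) = f := by rw [← mul_assoc, hfgf]
  have hp : IsStarProjection (g * f) := ⟨by rw [IsIdempotentElem, mul_assoc, hfgf'], hgf⟩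
  have hq : IsStarProjection (f * g) := ⟨by rw [IsIdempotentElem, ← mul_assoc, hfgf], hfg⟩
  refine ⟨mulLeftCLM (1 - g * f), mulLeftCLM (1 - f * g),
    hp.one_sub.isOrthogonalProjectionOp_mulLeftCLM,
    hq.one_sub.isOrthogonalProjectionOp_mulLeftCLM, ?_, mulLeftCLM g, ?_, ?_⟩ <;>
  simp only [one_sub_mulLeftCLM, sub_sub_cancel, ← map_mul] <;>
  congr 1
  · simp only [← mul_assoc, hfgf]
  · simp only [← mul_assoc, hfgf]
  · simp only [mul_assoc, hfgf']

theorem exists_invertibleUpTo_of_isClosed_range (F : A →L[Aᵐᵒᵖ] A)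
    (hF : IsClosed (Set.range F)) :
    ∃ P Q : A →L[Aᵐᵒᵖ] A, IsOrthogonalProjectionOp P ∧ IsOrthogonalProjectionOp Q ∧
      (1 - Q) * F * (1 - P) = F ∧ OpInvertibleUpTo F P Q := by
  rw [← mulLeftCLM_apply_one F] at hF ⊢
  obtain ⟨g, hfg, hgf, hfgf⟩ := exists_isSelfAdjoint_mul_mul_eq_of_isClosed_range hF
  exact exists_mulLeftCLM_invertibleUpTo hfg hgf hfgf

theorem OpInvertibleUpTo.range_eq_setOf_snd_apply_eq_zero {F P Q : A →L[Aᵐᵒᵖ] A}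
    (hinv : OpInvertibleUpTo F P Q) (hQ : IsIdempotentElem Q) (hF : (1 - Q) * F * (1 - P) = F) :
    Set.range F = {x | Q x = 0} := by
  obtain ⟨D, hFD, -⟩ := hinv
  rw [hF] at hFD
  refine ContinuousLinearMap.range_eq_setOf_apply_eq_zero ?_ hFD
  rw [← hF, ← mul_assoc, ← mul_assoc, hQ.mul_one_sub_self, zero_mul, zero_mul]

theorem OpInvertibleUpTo.range_fst_eq_setOf_apply_eq_zero {F P Q : A →L[Aᵐᵒᵖ] A}
    (hinv : OpInvertibleUpTo F P Q) (hP : IsIdempotentElem P) (hF : (1 - Q) * F * (1 - P) = F) :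
    Set.range P = {x | F x = 0} := by
  obtain ⟨D, -, hDF⟩ := hinv
  rw [hF] at hDF
  have hFP : F * (1 - P) = F := by rw [← hF, mul_assoc, hP.one_sub.eq]
  rw [hP.range_eq_setOf_one_sub_apply_eq_zero,
    ContinuousLinearMap.setOf_apply_eq_zero_eq hFP hDF]

/-- Lemma `related`: `F ∈ B(A)` has closed image iff there are orthogonal
projections `P, Q ∈ B(A)` with `(I-Q)F(I-P) = F` and `F` invertible up to
`(P,Q)`; in that case necessarily `Im P = ker F` and `Im Q = (Im F)^⊥`. -/
theorem closed_image_iff_invertibleUpTo (F : A →L[Aᵐᵒᵖ] A) :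
    (IsClosed (Set.range ⇑F) ↔
      ∃ P Q : A →L[Aᵐᵒᵖ] A, IsOrthogonalProjectionOp P ∧ IsOrthogonalProjectionOp Q ∧
        (1 - Q) * F * (1 - P) = F ∧ OpInvertibleUpTo F P Q) ∧
    (∀ P Q : A →L[Aᵐᵒᵖ] A, IsOrthogonalProjectionOp P → IsOrthogonalProjectionOp Q →
      (1 - Q) * F * (1 - P) = F → OpInvertibleUpTo F P Q →
        Set.range ⇑P = {x : A | F x = 0} ∧
        Set.range ⇑Q = OrthoComplement (Set.range ⇑F)) := by
  refine ⟨⟨exists_invertibleUpTo_of_isClosed_range F, ?_⟩, fun P Q hP hQ hF hinv => ⟨?_, ?_⟩⟩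
  · rintro ⟨P, Q, -, hQ, hF, hinv⟩
    rw [hinv.range_eq_setOf_snd_apply_eq_zero hQ.isIdempotentElem hF]
    exact isClosed_eq Q.continuous continuous_const
  · exact hinv.range_fst_eq_setOf_apply_eq_zero hP.isIdempotentElem hF
  · rw [hinv.range_eq_setOf_snd_apply_eq_zero hQ.isIdempotentElem hF,
      hQ.orthoComplement_setOf_apply_eq_zero]
end

section
/- Let N be a closed complementable submodule of A and F ∈ B(A). Then the restriction of F to N^⊥ is bounded below if and only if F is left invertible up to the projection P_N, i.e. there exists D ∈ B(A) with D F (I - P_N) = I - P_N. -/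
variable {A : Type*}

variable [CStarAlgebra A]

private lemma core_lemma {A : Type*} [CStarAlgebra A] (p f : A) (hpsa : star p = p) (hpp : p * p = p)
    (c : ℝ) (hc : 0 < c) (h : ∀ x : A, p * x = 0 → c * ‖x‖ ≤ ‖f * x‖) :
    ∃ d : A, d * f * (1 - p) = 1 - p := by
  letI : PartialOrder A := CStarAlgebra.spectralOrder A
  haveI : StarOrderedRing A := CStarAlgebra.spectralOrderedRing A
  set s : A := f * (1 - p) with hs
  set t : A := star s * s + c ^ 2 • p with ht
  have hpnn : (0:A) ≤ p := by
    have : p = star p * p := by rw [hpsa, hpp]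
    rw [this]; exact star_mul_self_nonneg p
  have hcpnn : (0:A) ≤ c ^ 2 • p := by
    have : c ^ 2 • p = star (c • p) * (c • p) := by
      rw [star_smul, star_trivial (c : ℝ), hpsa, smul_mul_assoc, mul_smul_comm, smul_smul,
        hpp, sq]
    rw [this]; exact star_mul_self_nonneg _
  have htsa : IsSelfAdjoint t := by
    rw [ht]
    unfold IsSelfAdjoint
    rw [star_add, star_mul, star_star, star_smul, star_trivial (c ^ 2 : ℝ), hpsa]
  have htnn : (0:A) ≤ t := add_nonneg (star_mul_self_nonneg s) hcpnn
  have hsp : s * p = 0 := by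
    rw [hs, mul_assoc, sub_mul, one_mul, hpp, sub_self, mul_zero]
  have htp : t * p = c ^ 2 • p := by
    rw [ht, add_mul, smul_mul_assoc, hpp, mul_assoc, hsp, mul_zero, zero_add]
  have hcs : star s * s = t - c ^ 2 • p := by rw [ht, add_sub_cancel_right]
  -- t is invertible
  have hunit : IsUnit t := by
    by_contra hnu
    have h0 : (0:ℝ) ∈ spectrum ℝ t := (spectrum.zero_mem_iff ℝ).mpr hnu
    set ε : ℝ := c ^ 2 / 49 with hε
    have hεpos : 0 < ε := by positivity
    set g0 : ℝ → ℝ := fun x => max 0 (1 - x / ε) with hg0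
    have hg0c : Continuous g0 :=
      continuous_const.max (continuous_const.sub (continuous_id.div_const ε))
    set z : A := cfc g0 t with hz
    have hspec : ∀ x ∈ spectrum ℝ t, 0 ≤ x := fun x hx => spectrum_nonneg_of_nonneg htnn hx
    have hz_le : ‖z‖ ≤ 1 := by
      refine norm_cfc_le zero_le_one fun x hx => ?_
      rw [Real.norm_eq_abs, abs_of_nonneg (le_max_left _ _)]
      refine max_le zero_le_one ?_
      have : 0 ≤ x / ε := div_nonneg (hspec x hx) hεpos.le
      linarith
    have hz_ge : (1:ℝ) ≤ ‖z‖ := by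
      have := norm_apply_le_norm_cfc g0 t h0 (hg0c.continuousOn) htsa
      simpa [hg0] using this
    have htz : ‖t * z‖ ≤ ε := by
      have key : t * z = cfc (fun x : ℝ => x * g0 x) t := by
        conv_rhs => rw [cfc_mul (fun x : ℝ => x) g0 t continuousOn_id hg0c.continuousOn,
          cfc_id' ℝ t htsa]
      rw [key]
      refine norm_cfc_le hεpos.le fun x hx => ?_
      have hx0 := hspec x hx
      have hg0nn : 0 ≤ g0 x := le_max_left _ _
      rw [Real.norm_eq_abs, abs_of_nonneg (mul_nonneg hx0 hg0nn)]
      rcases le_or_gt x ε with hxε | hxε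
      · have : g0 x ≤ 1 := by
          refine max_le zero_le_one ?_
          have : 0 ≤ x / ε := div_nonneg hx0 hεpos.le
          linarith
        nlinarith
      · have : g0 x = 0 := by
          refine max_eq_left ?_
          have : 1 < x / ε := (one_lt_div hεpos).mpr hxε
          linarith
        rw [this, mul_zero]; exact hεpos.le
    -- bound on ‖p * z‖
    have hpz : ‖p * z‖ ≤ 1 / 7 := by
      have hle : star z * (c ^ 2 • p) * z ≤ star z * t * z :=
        star_left_conjugate_le_conjugate (le_add_of_nonneg_left (star_mul_self_nonneg s)) z
      have heq : star z * (c ^ 2 • p) * z = c ^ 2 • (star (p * z) * (p * z)) := by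
        rw [star_mul, hpsa, mul_smul_comm, smul_mul_assoc]
        congr 1
        simp only [mul_assoc]
        rw [← mul_assoc p p z, hpp]
      have hnle : ‖star z * (c ^ 2 • p) * z‖ ≤ ‖star z * t * z‖ :=
        CStarAlgebra.norm_le_norm_of_nonneg_of_le (star_left_conjugate_nonneg hcpnn z) hle
      have h1 : ‖star z * (c ^ 2 • p) * z‖ = c ^ 2 * (‖p * z‖ * ‖p * z‖) := by
        rw [heq, norm_smul, CStarRing.norm_star_mul_self, Real.norm_eq_abs, abs_of_nonneg
          (sq_nonneg c)]
      have h2 : ‖star z * t * z‖ ≤ ε := by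
        calc ‖star z * t * z‖ = ‖star z * (t * z)‖ := by rw [mul_assoc]
          _ ≤ ‖star z‖ * ‖t * z‖ := norm_mul_le _ _
          _ ≤ 1 * ε := by
              refine mul_le_mul ?_ htz (norm_nonneg _) zero_le_one
              rwa [norm_star]
          _ = ε := one_mul ε
      rw [h1] at hnle
      have hfin := hnle.trans h2
      rw [hε] at hfin
      nlinarith [norm_nonneg (p * z), sq_nonneg (‖p * z‖ - 1 / 7), sq_nonneg c, hc,
        mul_pos hc hc]
    -- bound on ‖s * z‖
    have hsz : ‖s * z‖ * ‖s * z‖ ≤ ε + c ^ 2 * (1 / 7) := by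
      have h1 : ‖s * z‖ * ‖s * z‖ = ‖star z * (star s * s) * z‖ := by
        rw [← CStarRing.norm_star_mul_self, star_mul]
        congr 1
        simp only [hs, mul_assoc]
      have h2 : star z * (star s * s) * z = star z * ((star s * s) * z) := by
        rw [mul_assoc]
      have h3 : (star s * s) * z = t * z - c ^ 2 • (p * z) := by
        rw [hcs, sub_mul, smul_mul_assoc]
      have h4 : ‖(star s * s) * z‖ ≤ ε + c ^ 2 * (1 / 7) := by
        rw [h3]
        calc ‖t * z - c ^ 2 • (p * z)‖ ≤ ‖t * z‖ + ‖c ^ 2 • (p * z)‖ := norm_sub_le _ _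
          _ ≤ ε + c ^ 2 * (1 / 7) := by
              rw [norm_smul, Real.norm_eq_abs, abs_of_nonneg (sq_nonneg c)]
              have := mul_le_mul_of_nonneg_left hpz (sq_nonneg c)
              linarith
      calc ‖s * z‖ * ‖s * z‖ = ‖star z * (star s * s) * z‖ := h1
        _ = ‖star z * ((star s * s) * z)‖ := by rw [h2]
        _ ≤ ‖star z‖ * ‖(star s * s) * z‖ := norm_mul_le _ _
        _ ≤ 1 * (ε + c ^ 2 * (1 / 7)) := by
            refine mul_le_mul ?_ h4 (norm_nonneg _) zero_le_one
            rwa [norm_star]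
        _ = ε + c ^ 2 * (1 / 7) := one_mul _
    -- the element z - p*z is in the kernel of p
    have hker : p * (z - p * z) = 0 := by
      rw [mul_sub, ← mul_assoc, hpp, sub_self]
    have hlow := h (z - p * z) hker
    have hfz : f * (z - p * z) = s * z := by
      simp [hs, mul_sub, sub_mul, mul_assoc]
    rw [hfz] at hlow
    have hz' : (1 : ℝ) - 1 / 7 ≤ ‖z - p * z‖ := by
      have := norm_sub_norm_le z (p * z)
      linarith
    rw [hε] at hsz
    have e1 : (c * ‖z - p * z‖) * (c * ‖z - p * z‖) ≤ ‖s * z‖ * ‖s * z‖ :=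
      mul_le_mul hlow hlow (by positivity) (norm_nonneg _)
    have e2 : c * (6 / 7) ≤ c * ‖z - p * z‖ :=
      mul_le_mul_of_nonneg_left (by linarith) hc.le
    have e3 : (c * (6 / 7)) * (c * (6 / 7)) ≤ (c * ‖z - p * z‖) * (c * ‖z - p * z‖) :=
      mul_le_mul e2 e2 (by positivity) (by positivity)
    nlinarith [mul_pos hc hc]
  -- construct the left inverse
  obtain ⟨u, hu⟩ := hunit
  refine ⟨(↑u⁻¹ : A) * star s, ?_⟩
  have hu1 : (↑u⁻¹ : A) * t = 1 := by rw [← hu]; exact u.inv_mul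
  have hwp : c ^ 2 • ((↑u⁻¹ : A) * p) = p := by
    have := congrArg (fun y => (↑u⁻¹ : A) * y) htp
    simpa [← mul_assoc, hu1, mul_smul_comm] using this.symm
  calc (↑u⁻¹ : A) * star s * f * (1 - p) = (↑u⁻¹ : A) * (star s * s) := by
        rw [mul_assoc, mul_assoc, ← mul_assoc (star s) f (1 - p)]
    _ = (↑u⁻¹ : A) * t - c ^ 2 • ((↑u⁻¹ : A) * p) := by
        rw [hcs, mul_sub, mul_smul_comm]
    _ = 1 - p := by rw [hu1, hwp]

private lemma apply_eq_mul {A : Type*} [CStarAlgebra A] (G : A →L[Aᵐᵒᵖ] A) (x : A) :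
    G x = G 1 * x := by
  have h1 : G x = G (MulOpposite.op x • (1 : A)) := by
    rw [op_smul_eq_mul, one_mul]
  rw [h1, map_smul, op_smul_eq_mul]

private def leftMulCLM {A : Type*} [CStarAlgebra A] (d : A) : A →L[Aᵐᵒᵖ] A :=
  { toLinearMap :=
    { toFun := fun x => d * x
      map_add' := mul_add d
      map_smul' := fun a x => by
        simp only [RingHom.id_apply, MulOpposite.smul_eq_mul_unop, mul_assoc] }
    cont := continuous_const.mul continuous_id }

private lemma leftMulCLM_apply {A : Type*} [CStarAlgebra A] (d x : A) :
    leftMulCLM d x = d * x := rfl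

/-- For a closed complementable submodule `N` of `A` with orthogonal projection
`P = P_N`, the restriction of `F` to `N^⊥` is bounded below iff `F` is left
invertible up to `P_N`, i.e. `D F (I - P_N) = I - P_N` for some `D ∈ B(A)`. -/
theorem boundedBelow_iff_leftInvertibleUpTo (N : Submodule Aᵐᵒᵖ A)
    (hN : IsClosed (N : Set A)) (hNc : IsComplementable N)
    (P : A →L[Aᵐᵒᵖ] A) (hP : IsOrthogonalProjectionOp P)
    (hPr : Set.range ⇑P = (N : Set A)) (F : A →L[Aᵐᵒᵖ] A) :
    (∃ c : ℝ, 0 < c ∧ ∀ x ∈ OrthoComplement (N : Set A), c * ‖x‖ ≤ ‖F x‖) ↔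
    ∃ D : A →L[Aᵐᵒᵖ] A, D * F * (1 - P) = 1 - P := by
  have hPP : ∀ x : A, P (P x) = P x := by
    intro x
    have := congrFun (congrArg DFunLike.coe hP.1) x
    simpa [ContinuousLinearMap.mul_apply] using this
  have hmem : ∀ x : A, x ∈ OrthoComplement (N : Set A) ↔ P x = 0 := by
    intro x
    constructor
    · intro hx
      have hPxN : P x ∈ (N : Set A) := hPr ▸ Set.mem_range_self x
      have h1 : star (P x) * x = 0 := hx (P x) hPxN
      have h2 : star x * P x = 0 := by rw [← hP.2 x x]; exact h1
      have h3 : star (P x) * P x = 0 := by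
        rw [hP.2 x (P x), hPP, h2]
      exact (CStarRing.star_mul_self_eq_zero_iff _).mp h3
    · intro hx n hn
      rw [← hPr] at hn
      obtain ⟨y, rfl⟩ := hn
      rw [hP.2 y x, hx, mul_zero]
  constructor
  · rintro ⟨c, hc, hbd⟩
    have hPa : ∀ x : A, P x = P 1 * x := fun x => apply_eq_mul P x
    have hFa : ∀ x : A, F x = F 1 * x := fun x => apply_eq_mul F x
    have hpsa : star (P 1) = P 1 := by
      have := hP.2 1 1
      simpa using this
    have hpp : P 1 * P 1 = P 1 := by
      calc P 1 * P 1 = P (P 1) := (hPa (P 1)).symm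
        _ = P 1 := hPP 1
    have hyp : ∀ x : A, P 1 * x = 0 → c * ‖x‖ ≤ ‖F 1 * x‖ := by
      intro x hx
      have hxmem : x ∈ OrthoComplement (N : Set A) := (hmem x).mpr (by rw [hPa x, hx])
      have := hbd x hxmem
      rwa [hFa x] at this
    obtain ⟨d, hd⟩ := core_lemma (P 1) (F 1) hpsa hpp c hc hyp
    refine ⟨leftMulCLM d, ?_⟩
    ext x
    have h1P : (1 - P) x = (1 - P 1) * x := by
      simp [ContinuousLinearMap.sub_apply, sub_mul, ← hPa x]
    calc (leftMulCLM d * F * (1 - P)) x = d * (F ((1 - P) x)) := rfl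
      _ = d * (F 1 * ((1 - P 1) * x)) := by rw [h1P, hFa]
      _ = (d * F 1 * (1 - P 1)) * x := by simp only [mul_assoc]
      _ = (1 - P 1) * x := by rw [hd]
      _ = (1 - P) x := h1P.symm
  · rintro ⟨D, hD⟩
    refine ⟨(‖D 1‖ + 1)⁻¹, by positivity, ?_⟩
    intro x hx
    have hPx : P x = 0 := (hmem x).mp hx
    have hDFx : D (F x) = x := by
      have := congrFun (congrArg DFunLike.coe hD) x
      simpa [ContinuousLinearMap.mul_apply, ContinuousLinearMap.sub_apply,
        ContinuousLinearMap.one_apply, hPx] using this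
    have h1 : ‖x‖ ≤ ‖D 1‖ * ‖F x‖ :=
      calc ‖x‖ = ‖D 1 * F x‖ := by rw [← apply_eq_mul D (F x), hDFx]
        _ ≤ ‖D 1‖ * ‖F x‖ := norm_mul_le _ _
    rw [inv_mul_le_iff₀ (by positivity)]
    nlinarith [norm_nonneg (F x), norm_nonneg x]
end

section
/- An operator F ∈ B(A) is upper semi-Fredholm if and only if there exists an orthogonally complementable closed submodule M of A with projection P_M ∈ F such that the restriction of F to M^⊥ is bounded below. -/
variable {A : Type*}

variable [CStarAlgebra A]

/-- Upper semi-Fredholm type elements `KΦ₊(A)`. -/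
def UpperSemiFredholm (F : FiniteTypeIdeal A) (a : A) : Prop :=
  ∃ p q : A, IsProjectionElem p ∧ IsProjectionElem q ∧ p ∈ F.carrier ∧ InvertibleUpTo a p q

/-- Lower semi-Fredholm type elements `KΦ₋(A)`. -/
def LowerSemiFredholm (F : FiniteTypeIdeal A) (a : A) : Prop :=
  ∃ p q : A, IsProjectionElem p ∧ IsProjectionElem q ∧ q ∈ F.carrier ∧ InvertibleUpTo a p q

/-- Fredholm type elements `KΦ(A)`. -/
def FredholmType (F : FiniteTypeIdeal A) (a : A) : Prop :=
  ∃ p q : A, IsProjectionElem p ∧ IsProjectionElem q ∧ p ∈ F.carrier ∧ q ∈ F.carrier ∧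
    InvertibleUpTo a p q

/-- Upper semi-Weyl type elements `KΦ₊⁻(A)`. -/
def UpperSemiWeyl (F : FiniteTypeIdeal A) (a : A) : Prop :=
  ∃ p q : A, IsProjectionElem p ∧ IsProjectionElem q ∧ p ∈ F.carrier ∧ MvNSubEquiv p q ∧
    InvertibleUpTo a p q

/-- Lower semi-Weyl type elements `KΦ₋⁺(A)`. -/
def LowerSemiWeyl (F : FiniteTypeIdeal A) (a : A) : Prop :=
  ∃ p q : A, IsProjectionElem p ∧ IsProjectionElem q ∧ q ∈ F.carrier ∧ MvNSubEquiv q p ∧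
    InvertibleUpTo a p q

/-- Weyl type elements `KΦ₀(A)`. -/
def WeylType (F : FiniteTypeIdeal A) (a : A) : Prop :=
  ∃ p q : A, IsProjectionElem p ∧ IsProjectionElem q ∧ p ∈ F.carrier ∧ q ∈ F.carrier ∧
    MvNEquiv p q ∧ InvertibleUpTo a p q

lemma exists_approx_kernel' [PartialOrder A] [StarOrderedRing A]
    {s : A} (hs : 0 ≤ s) (hns : ¬ IsUnit s) {ε : ℝ} (hε : 0 < ε) :
    ∃ x : A, IsSelfAdjoint x ∧ ‖x‖ = 1 ∧ ‖s * x‖ ≤ ε := by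
  have hsa : IsSelfAdjoint s := .of_nonneg hs
  have hspec : ∀ t ∈ spectrum ℝ s, 0 ≤ t := fun t ht => spectrum_nonneg_of_nonneg hs ht
  set f : ℝ → ℝ := fun t => max 0 (1 - t / ε) with hf
  have hfc : Continuous f := continuous_const.max (by fun_prop)
  have h0 : (0 : ℝ) ∈ spectrum ℝ s := by rw [spectrum.zero_mem_iff]; exact hns
  refine ⟨cfc f s, cfc_predicate f s, ?_, ?_⟩
  · refine le_antisymm (norm_cfc_le zero_le_one fun t ht => ?_) ?_
    · have h1 : 0 ≤ t := hspec t ht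
      have : f t ≤ 1 := by
        simp only [hf, max_le_iff]
        have := div_nonneg h1 hε.le
        constructor <;> linarith
      rw [Real.norm_eq_abs, abs_of_nonneg (le_max_left _ _)]
      exact this
    · have h2 := norm_apply_le_norm_cfc f s h0 hfc.continuousOn hsa
      simpa [hf] using h2
  · have hmul : s * cfc f s = cfc (fun t => t * f t) s := by
      have h2 := cfc_mul (id : ℝ → ℝ) f s continuousOn_id hfc.continuousOn
      rw [cfc_id ℝ s hsa] at h2
      simpa [id] using h2.symm
    rw [hmul]
    refine norm_cfc_le hε.le fun t ht => ?_
    have h1 : 0 ≤ t := hspec t ht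
    rcases le_or_gt t ε with h | h
    · have hft : f t ≤ 1 := by
        simp only [hf, max_le_iff]
        have := div_nonneg h1 hε.le
        constructor <;> linarith
      have : 0 ≤ t * f t := mul_nonneg h1 (le_max_left _ _)
      rw [Real.norm_eq_abs, abs_of_nonneg this]
      nlinarith [le_max_left (0:ℝ) (1 - t / ε)]
    · have : f t = 0 := by
        simp only [hf, max_eq_left_iff]
        have := (one_le_div hε).mpr h.le
        linarith
      simp [this, hε.le]

lemma isUnit_aux' [PartialOrder A] [StarOrderedRing A] {p a : A} (hpsa : IsSelfAdjoint p)
    (hpp : p * p = p) {c : ℝ} (hc : 0 < c)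
    (hbd : ∀ x : A, c * ‖(1 - p) * x‖ ≤ ‖a * ((1 - p) * x)‖) :
    IsUnit (p + star (a * (1 - p)) * (a * (1 - p))) := by
  set t := a * (1 - p) with ht
  have hp0 : 0 ≤ p := by
    have h : p = star p * p := by rw [hpsa.star_eq, hpp]
    rw [h]; exact star_mul_self_nonneg p
  have hb0 : 0 ≤ star t * t := star_mul_self_nonneg t
  have hs0 : 0 ≤ p + star t * t := add_nonneg hp0 hb0
  by_contra hns
  have hε : (0:ℝ) < min (c^2/8) (1/4) := lt_min (by positivity) (by norm_num)
  obtain ⟨x, hxsa, hx1, hxs⟩ := exists_approx_kernel' hs0 hns hε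
  set ε := min (c^2/8) (1/4) with hεdef
  set s := p + star t * t with hs
  have key : ∀ y : A, 0 ≤ y → y ≤ s → ‖x * y * x‖ ≤ ε := by
    intro y hy0 hys
    have h1 : x * y * x ≤ x * s * x := by
      have := star_left_conjugate_le_conjugate hys x
      rwa [hxsa.star_eq] at this
    have h2 : 0 ≤ x * y * x := by
      have := star_left_conjugate_le_conjugate hy0 x
      rw [hxsa.star_eq] at this
      simpa using this
    calc ‖x * y * x‖ ≤ ‖x * s * x‖ := CStarAlgebra.norm_le_norm_of_nonneg_of_le h2 h1
      _ = ‖x * (s * x)‖ := by rw [mul_assoc]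
      _ ≤ ‖x‖ * ‖s * x‖ := norm_mul_le _ _
      _ ≤ ε := by rw [hx1, one_mul]; exact hxs
  have hple : p ≤ s := le_add_of_nonneg_right hb0
  have hble : star t * t ≤ s := le_add_of_nonneg_left hp0
  have hpx2 : ‖p * x‖ * ‖p * x‖ ≤ ε := by
    have h1 : star (p * x) * (p * x) = x * p * x := by
      rw [star_mul, hxsa.star_eq, hpsa.star_eq, ← mul_assoc, mul_assoc x p p, hpp]
    calc ‖p * x‖ * ‖p * x‖ = ‖star (p * x) * (p * x)‖ := (CStarRing.norm_star_mul_self).symm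
      _ = ‖x * p * x‖ := by rw [h1]
      _ ≤ ε := key p hp0 hple
  have hax2 : ‖a * ((1 - p) * x)‖ * ‖a * ((1 - p) * x)‖ ≤ ε := by
    have h0 : a * ((1 - p) * x) = t * x := by rw [ht, mul_assoc]
    have h1 : star (t * x) * (t * x) = x * (star t * t) * x := by
      rw [star_mul, hxsa.star_eq, ← mul_assoc, mul_assoc x (star t) t]
    calc ‖a * ((1 - p) * x)‖ * ‖a * ((1 - p) * x)‖
        = ‖star (t * x) * (t * x)‖ := by rw [h0, CStarRing.norm_star_mul_self]
      _ = ‖x * (star t * t) * x‖ := by rw [h1]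
      _ ≤ ε := key _ hb0 hble
  have hlow : 1 - ‖p * x‖ ≤ ‖(1 - p) * x‖ := by
    have h2 : (1 - p) * x = x - p * x := by rw [sub_mul, one_mul]
    rw [h2, ← hx1]
    exact norm_sub_norm_le x (p * x)
  have hbdx := hbd x
  have hεc : ε ≤ c^2/8 := min_le_left _ _
  have hε4 : ε ≤ 1/4 := min_le_right _ _
  have hδ0 : 0 ≤ ‖p * x‖ := norm_nonneg _
  have hr0 : 0 ≤ ‖a * ((1 - p) * x)‖ := norm_nonneg _
  have hm0 : 0 ≤ ‖(1 - p) * x‖ := norm_nonneg _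
  have hδ : ‖p * x‖ ≤ 1/2 := by nlinarith
  have hm : (1:ℝ)/2 ≤ ‖(1 - p) * x‖ := by linarith
  have hr : c / 2 ≤ ‖a * ((1 - p) * x)‖ := by nlinarith
  nlinarith

/-- Lemma `boundedbelow`: `a` (as an operator on the Hilbert module `A`) is
upper semi-Fredholm iff there is an orthogonally complementable closed
submodule `M = Im p` (given by an orthogonal projection `p ∈ F`) such that the
restriction of `a` to `M^⊥ = Im(1-p)` is bounded below. -/
theorem upperSemiFredholm_iff_boundedBelow (F : FiniteTypeIdeal A) (a : A) :
    UpperSemiFredholm F a ↔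
      ∃ p : A, IsProjectionElem p ∧ p ∈ F.carrier ∧
        ∃ c : ℝ, 0 < c ∧ ∀ x : A, c * ‖(1 - p) * x‖ ≤ ‖a * ((1 - p) * x)‖ := by
  constructor
  · rintro ⟨p, q, ⟨hpsa, hpp⟩, hq, hpF, w, hw1, hw2⟩
    refine ⟨p, ⟨hpsa, hpp⟩, hpF, ?_⟩
    have hq1 : (1 - p) * (1 - p) = 1 - p := by
      rw [mul_sub, mul_one, sub_mul, one_mul, hpp, sub_self, sub_zero]
    set k := w * (1 - q) with hk
    have key : ∀ x : A, (1 - p) * x = k * (a * ((1 - p) * x)) := by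
      intro x
      have hy : (1 - p) * ((1 - p) * x) = (1 - p) * x := by rw [← mul_assoc, hq1]
      calc (1 - p) * x = (w * ((1 - q) * a * (1 - p))) * ((1 - p) * x) := by
            rw [hw2, hy]
        _ = k * (a * ((1 - p) * ((1 - p) * x))) := by rw [hk]; simp only [mul_assoc]
        _ = k * (a * ((1 - p) * x)) := by rw [hy]
    rcases eq_or_ne k 0 with hk0 | hk0
    · refine ⟨1, one_pos, fun x => ?_⟩
      have h2 := key x
      rw [hk0, zero_mul] at h2
      rw [h2]
      simp
    · refine ⟨‖k‖⁻¹, inv_pos.mpr (norm_pos_iff.mpr hk0), fun x => ?_⟩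
      have h2 : ‖(1 - p) * x‖ ≤ ‖k‖ * ‖a * ((1 - p) * x)‖ := by
        conv_lhs => rw [key x]
        exact norm_mul_le _ _
      rw [inv_mul_le_iff₀ (norm_pos_iff.mpr hk0)]
      exact h2
  · rintro ⟨p, ⟨hpsa, hpp⟩, hpF, c, hc, hbd⟩
    letI : PartialOrder A := CStarAlgebra.spectralOrder A
    letI : StarOrderedRing A := CStarAlgebra.spectralOrderedRing A
    set t := a * (1 - p) with ht
    have hstar : star t = (1 - p) * star a := by
      rw [ht, star_mul, star_sub, star_one, hpsa.star_eq]
    have hq1 : (1 - p) * (1 - p) = 1 - p := by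
      rw [mul_sub, mul_one, sub_mul, one_mul, hpp, sub_self, sub_zero]
    have hp1p : p * (1 - p) = 0 := by rw [mul_sub, mul_one, hpp, sub_self]
    have h1pp : (1 - p) * p = 0 := by rw [sub_mul, one_mul, hpp, sub_self]
    obtain ⟨v, hv⟩ := isUnit_aux' hpsa hpp hc hbd
    set s := p + star t * t with hs
    set u := ((v⁻¹ : Aˣ) : A) with hu
    have hsu : s * u = 1 := by rw [← hv]; exact v.mul_inv
    have hus : u * s = 1 := by rw [← hv]; exact v.inv_mul
    have hpb : p * (star t * t) = 0 := by
      have h1 : p * (star t * t) = (p * (1 - p)) * (star a * t) := by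
        rw [hstar]; simp only [mul_assoc]
      rw [h1, hp1p, zero_mul]
    have hbp : (star t * t) * p = 0 := by
      have h1 : t * p = 0 := by rw [ht, mul_assoc, h1pp, mul_zero]
      rw [mul_assoc, h1, mul_zero]
    have hsp : s * p = p := by rw [hs, add_mul, hpp, hbp, add_zero]
    have hps : p * s = p := by rw [hs, mul_add, hpp, hpb, add_zero]
    have hup : u * p = p := by
      conv_lhs => rw [← hsp]
      rw [← mul_assoc, hus, one_mul]
    have hpu : p * u = p := by
      conv_lhs => rw [← hps]
      rw [mul_assoc, hsu, mul_one]
    have hssa : IsSelfAdjoint s := by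
      rw [hs]
      exact hpsa.add (IsSelfAdjoint.star_mul_self t)
    have husa : star u = u := by
      have h1 : star u * s = 1 := by
        rw [← hssa.star_eq, ← star_mul, hsu, star_one]
      calc star u = star u * (s * u) := by rw [hsu, mul_one]
        _ = (star u * s) * u := by rw [mul_assoc]
        _ = u := by rw [h1, one_mul]
    set d := u - p with hd
    have hb' : star t * t = s - p := by rw [hs, add_sub_cancel_left]
    have hdb : d * (star t * t) = 1 - p := by
      rw [hd, hb', sub_mul, mul_sub, mul_sub, hus, hup, hps, hpp, sub_self, sub_zero]
    have hdsa : star d = d := by rw [hd, star_sub, husa, hpsa.star_eq]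
    have hpd : p * d = 0 := by rw [hd, mul_sub, hpu, hpp, sub_self]
    have hd1p : (1 - p) * d = d := by rw [sub_mul, one_mul, hpd, sub_zero]
    set e := d * star t with he
    have het : e * t = 1 - p := by rw [he, mul_assoc, hdb]
    have ht1p : t * (1 - p) = t := by rw [ht, mul_assoc, hq1]
    set q' := t * e with hq'
    have hq'sa : star q' = q' := by
      rw [hq', he]
      simp only [star_mul, star_star, hdsa, mul_assoc]
    have h1pe : (1 - p) * e = e := by rw [he, ← mul_assoc, hd1p]
    have hq't : q' * t = t := by rw [hq', mul_assoc, het, ht1p]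
    have hq'q' : q' * q' = q' := by
      calc q' * q' = t * ((e * t) * e) := by rw [hq']; simp only [mul_assoc]
        _ = t * e := by rw [het, h1pe]
        _ = q' := hq'.symm
    refine ⟨p, 1 - q', ⟨hpsa, hpp⟩, ⟨?_, ?_⟩, hpF, e, ?_, ?_⟩
    · rw [IsSelfAdjoint, star_sub, star_one, hq'sa]
    · rw [mul_sub, mul_one, sub_mul, one_mul, hq'q', sub_self, sub_zero]
    · rw [sub_sub_cancel, mul_assoc q' a, ← ht, hq't]
    · rw [sub_sub_cancel, mul_assoc q' a, ← ht, hq't, het]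
end

section
/- Let a ∈ A, let p, q, p', q' be projections in A with p, q, p' ∈ F. If a is invertible up to (p,q) and also invertible up to (p',q'), then q' ∈ F. Symmetrically, if p, q, q' ∈ F, then p' ∈ F. -/
variable {A : Type*}

variable [CStarAlgebra A]

private lemma FiniteTypeIdeal.neg_mem (F : FiniteTypeIdeal A) {x : A}
    (hx : x ∈ F.carrier) : -x ∈ F.carrier := by
  simpa using F.smul_mem (-1) hx

private lemma FiniteTypeIdeal.sub_mem (F : FiniteTypeIdeal A) {x y : A}
    (hx : x ∈ F.carrier) (hy : y ∈ F.carrier) : x - y ∈ F.carrier := by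
  rw [sub_eq_add_neg]; exact F.add_mem hx (F.neg_mem hy)

/-- Key algebraic half of Lemma 2: if `p, q, p' ∈ F` and `a` is invertible up to
`(p,q)` and `(p',q')` with `q'` a projection, then `q' ∈ F`. -/
private lemma finite_type_transfer_aux (F : FiniteTypeIdeal A) (a p q p' q' : A)
    (hq' : IsProjectionElem q')
    (hpF : p ∈ F.carrier) (hqF : q ∈ F.carrier) (hp'F : p' ∈ F.carrier)
    (h1 : InvertibleUpTo a p q) (h2 : InvertibleUpTo a p' q') :
    q' ∈ F.carrier := by
  obtain ⟨b, hb1, hb2⟩ := h1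
  obtain ⟨b', hc1, hc2⟩ := h2
  -- Step A : a*b - 1 ∈ F
  have hA : a * b - 1 ∈ F.carrier := by
    have key : a * b - 1 = a * (p * b) + q * (a * ((1 - p) * b)) - q := by
      have h : a * b = a * (p * b) + q * (a * ((1 - p) * b))
          + (1 - q) * a * (1 - p) * b := by noncomm_ring
      rw [h, hb1]; noncomm_ring
    rw [key]
    exact F.sub_mem (F.add_mem (F.mul_mem_left a (F.mul_mem_right b hpF))
      (F.mul_mem_right _ hqF)) hqF
  -- Step u : b'*((1-q')*a) - 1 ∈ F
  have hu : b' * ((1 - q') * a) - 1 ∈ F.carrier := by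
    have key : b' * ((1 - q') * a) - 1
        = b' * (((1 - q') * a) * p') + (b' * ((1 - q') * a * (1 - p')) - 1) := by
      noncomm_ring
    have key2 : b' * ((1 - q') * a) - 1 = b' * (((1 - q') * a) * p') - p' := by
      rw [key, hc2]; noncomm_ring
    rw [key2]
    exact F.sub_mem (F.mul_mem_left b' (F.mul_mem_left _ hp'F)) hp'F
  -- Step B : b'*(1-q') - b ∈ F
  have hB : b' * (1 - q') - b ∈ F.carrier := by
    have key : b' * (1 - q') - b
        = (b' * ((1 - q') * a) - 1) * b - (b' * (1 - q')) * (a * b - 1) := by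
      noncomm_ring
    rw [key]
    exact F.sub_mem (F.mul_mem_right b hu) (F.mul_mem_left _ hA)
  -- Step C : (1-q')*(star b') - star b ∈ F
  have hC : (1 - q') * star b' - star b ∈ F.carrier := by
    have := F.star_mem hB
    have key : star (b' * (1 - q') - b) = (1 - q') * star b' - star b := by
      simp [star_sub, star_mul, hq'.1.star_eq]
    rwa [key] at this
  -- Step D : (1-q')*(star b' * star a) - 1 ∈ F
  have hD : (1 - q') * (star b' * star a) - 1 ∈ F.carrier := by
    have hA' : star b * star a - 1 ∈ F.carrier := by
      have := F.star_mem hA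
      have key : star (a * b - 1) = star b * star a - 1 := by
        simp [star_sub, star_mul]
      rwa [key] at this
    have key : (1 - q') * (star b' * star a) - 1
        = ((1 - q') * star b' - star b) * star a + (star b * star a - 1) := by
      noncomm_ring
    rw [key]
    exact F.add_mem (F.mul_mem_right _ hC) hA'
  -- Final step : q' = (-q') * ((1-q')*(star b' * star a) - 1)
  have hz : q' * (1 - q') = 0 := by
    rw [mul_sub, mul_one, hq'.2, sub_self]
  have key : q' = (-q') * ((1 - q') * (star b' * star a) - 1) := by
    have h : (-q') * ((1 - q') * (star b' * star a) - 1)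
        = -((q' * (1 - q')) * (star b' * star a)) + q' := by noncomm_ring
    rw [h, hz]; simp
  rw [key]
  exact F.mul_mem_left _ hD

/-- Lemma 2 of [BJMA]: if `a` is invertible up to `(p,q)` and up to `(p',q')`,
with `p, q, p' ∈ F`, then `q' ∈ F`; symmetrically, if `p, q, q' ∈ F` then
`p' ∈ F`. -/
theorem finite_type_transfer (F : FiniteTypeIdeal A) (a p q p' q' : A)
    (hp : IsProjectionElem p) (hq : IsProjectionElem q)
    (hp' : IsProjectionElem p') (hq' : IsProjectionElem q')
    (h1 : InvertibleUpTo a p q) (h2 : InvertibleUpTo a p' q') :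
    (p ∈ F.carrier → q ∈ F.carrier → p' ∈ F.carrier → q' ∈ F.carrier) ∧
    (p ∈ F.carrier → q ∈ F.carrier → q' ∈ F.carrier → p' ∈ F.carrier) := by
  -- star versions: `star a` is invertible up to `(q, p)` and `(q', p')`.
  have hstar : ∀ (x P Q : A), IsProjectionElem P → IsProjectionElem Q →
      InvertibleUpTo x P Q → InvertibleUpTo (star x) Q P := by
    rintro x P Q hP hQ ⟨b, hb1, hb2⟩
    refine ⟨star b, ?_, ?_⟩
    · calc (1 - P) * star x * (1 - Q) * star b
          = star (b * ((1 - Q) * x * (1 - P))) := by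
            simp only [star_mul, star_sub, star_one, hP.1.star_eq, hQ.1.star_eq]
            noncomm_ring
        _ = 1 - P := by rw [hb2, star_sub, star_one, hP.1.star_eq]
    · calc star b * ((1 - P) * star x * (1 - Q))
          = star ((1 - Q) * x * (1 - P) * b) := by
            simp only [star_mul, star_sub, star_one, hP.1.star_eq, hQ.1.star_eq]
            noncomm_ring
        _ = 1 - Q := by rw [hb1, star_sub, star_one, hQ.1.star_eq]
  constructor
  · intro hpF hqF hp'F
    exact finite_type_transfer_aux F a p q p' q' hq' hpF hqF hp'F h1 h2
  · intro hpF hqF hq'F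
    exact finite_type_transfer_aux F (star a) q p q' p' hp' hqF hpF hq'F
      (hstar a p q hp hq h1) (hstar a p' q' hp' hq' h2)
end

section
/- Let F ∈ MKΦ₊(A) and suppose A = M₁ ⊕̃ N₁ → M₂ ⊕̃ N₂ = A and A = M₁' ⊕̃ N₁' → M₂' ⊕̃ N₂' = A are two MKΦ₊-decompositions for F. If the orthogonal projection P_{N₂} belongs to F, then P_{N₂'} ∈ F. -/
variable {A : Type*}

variable [CStarAlgebra A]

/-- An `MKΦ₊`-decomposition for `T ∈ B(A)`: a pair of decompositions
`A = M₁ ⊕̃ N₁` and `A = M₂ ⊕̃ N₂` into closed complementable submodules with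
respect to which `T` is diagonal, the restriction `T : M₁ → M₂` is an
isomorphism (onto `M₂` and bounded below), and the orthogonal projection onto
`N₁` is a finite type element. -/
def MKPhiPlusDecomp (F : FiniteTypeIdeal A) (T : A →L[Aᵐᵒᵖ] A)
    (M₁ N₁ M₂ N₂ : Submodule Aᵐᵒᵖ A) : Prop :=
  IsClosed (M₁ : Set A) ∧ IsClosed (N₁ : Set A) ∧
  IsClosed (M₂ : Set A) ∧ IsClosed (N₂ : Set A) ∧
  M₁ ⊓ N₁ = ⊥ ∧ M₁ ⊔ N₁ = ⊤ ∧ M₂ ⊓ N₂ = ⊥ ∧ M₂ ⊔ N₂ = ⊤ ∧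
  (∀ x ∈ M₁, T x ∈ M₂) ∧ (∀ x ∈ N₁, T x ∈ N₂) ∧
  (⇑T '' (M₁ : Set A) = (M₂ : Set A)) ∧
  (∃ c : ℝ, 0 < c ∧ ∀ x ∈ M₁, c * ‖x‖ ≤ ‖T x‖) ∧
  (∃ p : A, IsProjectionElem p ∧ p ∈ F.carrier ∧ {x : A | p * x = x} = (N₁ : Set A))


/-!
A right `A`-module map `T : A → A` is left multiplication by `t = T 1`, and so are the
projections belonging to the decompositions. Since `T M₁ = M₂`, splitting `1 = T d + n₂` along
`A = M₂ ⊕ N₂` makes `t` right invertible modulo the ideal: `1 - t d = n₂ ∈ F`. If `e'` is the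
projection onto `N₂'` along `M₂'` and `1 = m₁' + f'` along `A = M₁' ⊕ N₁'`, then
`e' t (1 - f') = e' T m₁' = 0`, hence `e' = e' (1 - t d) + e' t f' d ∈ F`, and finally
`q' = e' q' ∈ F`.
-/

theorem LinearMap.apply_eq_apply_one_mul {R : Type*} [Semiring R] (f : R →ₗ[Rᵐᵒᵖ] R) (x : R) :
    f x = f 1 * x := by
  simpa using f.map_smul (MulOpposite.op x) 1

theorem Submodule.exists_mul_eq_zero_and_mul_eq_self {R : Type*} [Ring R]
    {M N : Submodule Rᵐᵒᵖ R} (h : IsCompl M N) :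
    ∃ e : R, (∀ x ∈ M, e * x = 0) ∧ ∀ x ∈ N, e * x = x := by
  refine ⟨N.projection M h.symm 1, fun x hx => ?_, fun x hx => ?_⟩
  · rw [← LinearMap.apply_eq_apply_one_mul]
    exact projection_apply_of_mem_right h.symm hx
  · rw [← LinearMap.apply_eq_apply_one_mul]
    exact projection_apply_of_mem_left h.symm hx

theorem Submodule.exists_add_eq_of_sup_eq_top {R E : Type*} [Semiring R] [AddCommMonoid E]
    [Module R E] {M N : Submodule R E} (h : M ⊔ N = ⊤) (x : E) : ∃ m ∈ M, ∃ n ∈ N, m + n = x :=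
  Submodule.mem_sup.mp (h ▸ Submodule.mem_top)

namespace FiniteTypeIdeal

theorem setOf_mul_eq_self_subset (F : FiniteTypeIdeal A) {p : A} (hp : p ∈ F.carrier) :
    {x : A | p * x = x} ⊆ F.carrier := fun x hx =>
  (hx : p * x = x) ▸ F.mul_mem_right x hp

theorem mem_of_mul_mul_one_sub_eq_zero (F : FiniteTypeIdeal A) {t d e f : A}
    (htd : 1 - t * d ∈ F.carrier) (hf : f ∈ F.carrier) (h : e * t * (1 - f) = 0) :
    e ∈ F.carrier := by
  have : e = e * (1 - t * d) + e * t * f * d + e * t * (1 - f) * d := by noncomm_ring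
  rw [this, h, zero_mul, add_zero]
  exact F.add_mem (F.mul_mem_left e htd) (F.mul_mem_right d (F.mul_mem_left _ hf))

end FiniteTypeIdeal

theorem mkPhiPlus_decomp_transfer_general (F : FiniteTypeIdeal A) (T : A →L[Aᵐᵒᵖ] A)
    (M₁ N₁ M₂ N₂ M₁' N₁' M₂' N₂' : Submodule Aᵐᵒᵖ A)
    (h1 : MKPhiPlusDecomp F T M₁ N₁ M₂ N₂)
    (h2 : MKPhiPlusDecomp F T M₁' N₁' M₂' N₂')
    (q q' : A) (hq' : IsProjectionElem q')
    (hqr : {x : A | q * x = x} = (N₂ : Set A))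
    (hqr' : {x : A | q' * x = x} = (N₂' : Set A))
    (hqF : q ∈ F.carrier) : q' ∈ F.carrier := by
  obtain ⟨-, -, -, -, -, -, -, hMN₂, -, -, hTM₁, -, -⟩ := h1
  obtain ⟨-, -, -, -, -, hMN₁', hd₂', hc₂', hTM₁', -, -, -, p', -, hp'F, hp'N₁'⟩ := h2
  have hT (x : A) : T x = T 1 * x := (T : A →ₗ[Aᵐᵒᵖ] A).apply_eq_apply_one_mul x
  obtain ⟨m₂, hm₂, n₂, hn₂, hmn₂⟩ := Submodule.exists_add_eq_of_sup_eq_top hMN₂ 1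
  obtain ⟨d, -, rfl⟩ := hTM₁.ge hm₂
  have htd : 1 - T 1 * d ∈ F.carrier := by
    rw [← hT, ← hmn₂, add_sub_cancel_left]
    exact F.setOf_mul_eq_self_subset hqF (hqr.ge hn₂)
  obtain ⟨e', he'M₂', he'N₂'⟩ :=
    Submodule.exists_mul_eq_zero_and_mul_eq_self (M := M₂')
      ⟨disjoint_iff.mpr hd₂', codisjoint_iff.mpr hc₂'⟩
  obtain ⟨m₁', hm₁', f', hf', hmf₁'⟩ := Submodule.exists_add_eq_of_sup_eq_top hMN₁' 1
  have he'tf' : e' * T 1 * (1 - f') = 0 := by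
    rw [mul_assoc, ← hT, ← hmf₁', add_sub_cancel_right]
    exact he'M₂' _ (hTM₁' _ hm₁')
  have he'F : e' ∈ F.carrier :=
    F.mem_of_mul_mul_one_sub_eq_zero htd (F.setOf_mul_eq_self_subset hp'F (hp'N₁'.ge hf')) he'tf'
  exact he'N₂' q' (hqr'.le hq'.2) ▸ F.mul_mem_right q' he'F

/-- Lemma R12 L01: if `F ∈ MKΦ₊(A)` admits two `MKΦ₊`-decompositions
`A = M₁ ⊕̃ N₁ → M₂ ⊕̃ N₂ = A` and `A = M₁' ⊕̃ N₁' → M₂' ⊕̃ N₂' = A`, and the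
orthogonal projection onto `N₂` is of finite type, then so is the orthogonal
projection onto `N₂'`. -/
theorem mkPhiPlus_decomp_transfer (F : FiniteTypeIdeal A) (T : A →L[Aᵐᵒᵖ] A)
    (M₁ N₁ M₂ N₂ M₁' N₁' M₂' N₂' : Submodule Aᵐᵒᵖ A)
    (h1 : MKPhiPlusDecomp F T M₁ N₁ M₂ N₂)
    (h2 : MKPhiPlusDecomp F T M₁' N₁' M₂' N₂')
    (q q' : A) (hq : IsProjectionElem q) (hq' : IsProjectionElem q')
    (hqr : {x : A | q * x = x} = (N₂ : Set A))
    (hqr' : {x : A | q' * x = x} = (N₂' : Set A))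
    (hqF : q ∈ F.carrier) : q' ∈ F.carrier :=
  mkPhiPlus_decomp_transfer_general F T M₁ N₁ M₂ N₂ M₁' N₁' M₂' N₂' h1 h2 q q' hq' hqr hqr' hqF
end

section
/- An element a ∈ A is an upper semi-Weyl type element (a ∈ KΦ₊⁻(A)) if and only if a = b + f for some left invertible b ∈ A and some f ∈ F. -/
variable {A : Type*}

variable [CStarAlgebra A]

/-!
If `a` is invertible up to `(p, q)` and `v v* = p`, `v* v ≤ q`, then `a (1 - p) + v*` is left
invertible and differs from `a` by `a p - v* ∈ F`.

Conversely let `a = b + f` with `c b = 1` and `f ∈ F`. A projection `p ∈ F` from the approximate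
unit with `‖f (1 - p)‖` small makes `d = b + f (1 - p)` left invertible, and `d` agrees with `a`
on `1 - p`. An element `u` with a left inverse on a projection `e` has a range projection `P ∼ e`,
implemented by the partial isometry `u (u* u + 1 - e) ^ (-1/2)`. With `P` the range projection of
`d (1 - p)`, the element `d` is invertible up to `(p, 1 - P)`, and `p ⪯ 1 - P` because
`(1 - P) d p` has the left inverse `p c' (1 - P)` on `p`, where `c' d = 1`.
-/

namespace IsProjectionElem

variable {p : A}

lemma star_eq (hp : IsProjectionElem p) : star p = p := hp.1.star_eq

lemma one_sub (hp : IsProjectionElem p) : IsProjectionElem (1 - p) :=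
  ⟨.sub (.one A) hp.1, by rw [mul_sub, mul_one, sub_mul, one_mul, hp.2, sub_self, sub_zero]⟩

lemma mul_one_sub (hp : IsProjectionElem p) : p * (1 - p) = 0 := by
  rw [mul_sub, mul_one, hp.2, sub_self]

lemma one_sub_mul (hp : IsProjectionElem p) : (1 - p) * p = 0 := by
  rw [sub_mul, one_mul, hp.2, sub_self]

lemma nonneg [PartialOrder A] [StarOrderedRing A] (hp : IsProjectionElem p) : 0 ≤ p := by
  simpa only [hp.star_eq, hp.2] using star_mul_self_nonneg p

lemma mul_star_mul_self {v : A} (hv : IsProjectionElem (star v * v)) :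
    v * (star v * v) = v := by
  have h : star (v * (star v * v) - v) * (v * (star v * v) - v) = 0 :=
    calc star (v * (star v * v) - v) * (v * (star v * v) - v)
        = (star v * v) * (star v * v) * (star v * v) - (star v * v) * (star v * v)
          - (star v * v) * (star v * v) + star v * v := by
          rw [star_sub, star_mul, hv.star_eq]; noncomm_ring
      _ = 0 := by rw [hv.2, hv.2]; abel
  exact sub_eq_zero.mp (CStarRing.star_mul_self_eq_zero_iff _ |>.mp h)

lemma le_norm_sq_smul_star_mul_self [PartialOrder A] [StarOrderedRing A]
    (hp : IsProjectionElem p) {t u : A} (htu : t * u = p) : p ≤ ‖t‖ ^ 2 • (star u * u) := by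
  have hconj : star u * (star t * t) * u ≤ star u * algebraMap ℝ A (‖t‖ ^ 2) * u :=
    star_left_conjugate_le_conjugate CStarAlgebra.star_mul_le_algebraMap_norm_sq u
  calc p = star (t * u) * (t * u) := by rw [htu, hp.star_eq, hp.2]
    _ = star u * (star t * t) * u := by simp only [star_mul, mul_assoc]
    _ ≤ star u * algebraMap ℝ A (‖t‖ ^ 2) * u := hconj
    _ = ‖t‖ ^ 2 • (star u * u) := by
      rw [Algebra.algebraMap_eq_smul_one, mul_smul_comm, mul_one, smul_mul_assoc]

lemma isStrictlyPositive_star_mul_self_add_one_sub [PartialOrder A] [StarOrderedRing A]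
    (hp : IsProjectionElem p) {t u : A} (htu : t * u = p) :
    IsStrictlyPositive (star u * u + (1 - p)) := by
  set γ := ‖t‖ ^ 2
  have hγ : 0 < γ + 1 := by positivity
  have hle : (1 : A) ≤ (γ + 1) • (star u * u + (1 - p)) :=
    calc (1 : A) = p + (1 - p) := by abel
      _ ≤ γ • (star u * u) + (1 - p) := by gcongr; exact hp.le_norm_sq_smul_star_mul_self htu
      _ ≤ γ • (star u * u) + (1 - p) + (γ • (1 - p) + star u * u) :=
        le_add_of_nonneg_right (add_nonneg (smul_nonneg (by positivity) hp.one_sub.nonneg)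
          (star_mul_self_nonneg u))
      _ = (γ + 1) • (star u * u + (1 - p)) := by
        rw [smul_add, add_smul, add_smul, one_smul, one_smul]; abel
  simpa only [smul_smul, inv_mul_cancel₀ hγ.ne', one_smul] using
    (isStrictlyPositive_one.of_le hle).smul (inv_pos.mpr hγ)

/-- `u * B` is the range projection of `u`. -/
lemma exists_mul_eq_isProjectionElem_mvnEquiv (hp : IsProjectionElem p) {t u : A}
    (htu : t * u = p) (hup : u * p = u) :
    ∃ B : A, B * u = p ∧ IsProjectionElem (u * B) ∧ MvNEquiv p (u * B) := by
  let _ := CStarAlgebra.spectralOrder A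
  have _ := CStarAlgebra.spectralOrderedRing A
  set x := star u * u + (1 - p)
  have hx : IsStrictlyPositive x := hp.isStrictlyPositive_star_mul_self_add_one_sub htu
  set s : A := x ^ (-(1 / 2) : ℝ)
  have hs : IsSelfAdjoint s := (CFC.rpow_nonneg (a := x)).isSelfAdjoint
  have hsxs : s * x * s = 1 := CFC.conjugate_rpow_neg_one_half x
  have hxp : x * p = star u * u := by rw [add_mul, mul_assoc, hup, hp.one_sub_mul, add_zero]
  have hpx : p * x = star u * u := by
    simpa only [star_mul, star_star, hp.star_eq, x, star_add, star_sub, star_one]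
      using congrArg star hxp
  have hxs : Commute x s := (Commute.refl x).cfc_nnreal _ |>.symm
  have hps : Commute p s := Commute.cfc_nnreal (a := x) (hpx.trans hxp.symm).symm _ |>.symm
  have hz : star u * u = x - (1 - p) := by simp only [x]; abel
  have hx1p : x * (1 - p) = 1 - p := by rw [mul_sub, mul_one, hxp, hz, sub_sub_cancel]
  have hssx : s * s * x = 1 := by rw [mul_assoc, ← hxs.eq, ← mul_assoc, hsxs]
  have hss1p : s * s * (1 - p) = 1 - p :=
    calc s * s * (1 - p) = s * s * x * (1 - p) := by rw [mul_assoc (s * s) x, hx1p]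
      _ = 1 - p := by rw [hssx, one_mul]
  have hs1p : s * (1 - p) * s = 1 - p := by
    rw [mul_assoc, ((Commute.one_left s).sub_left hps).eq, ← mul_assoc, hss1p]
  have hBu : s * s * star u * u = p := by
    rw [mul_assoc, hz, mul_sub, hssx, hss1p, sub_sub_cancel]
  have hss : IsSelfAdjoint (s * s) := by
    simpa only [hs.star_eq] using IsSelfAdjoint.star_mul_self s
  refine ⟨s * s * star u, hBu, ⟨by simpa only [mul_assoc] using hss.conjugate u, ?_⟩,
    s * star u, ?_, ?_⟩
  · rw [mul_assoc, ← mul_assoc (s * s * star u) u, hBu, ← mul_assoc u p, hup]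
  · rw [star_mul, star_star, hs.star_eq, mul_assoc, ← mul_assoc (star u), hz, sub_mul, mul_sub,
      ← mul_assoc, ← mul_assoc, hsxs, hs1p, sub_sub_cancel]
  · rw [star_mul, star_star, hs.star_eq]; simp only [mul_assoc]

lemma mvnSubEquiv_of_mul_eq (hp : IsProjectionElem p) {q t u : A} (hq : IsSelfAdjoint q)
    (htu : t * u = p) (hup : u * p = u) (hqu : q * u = u) : MvNSubEquiv p q := by
  obtain ⟨B, -, hP, hpP⟩ := hp.exists_mul_eq_isProjectionElem_mvnEquiv htu hup
  have hqP : q * (u * B) = u * B := by rw [← mul_assoc, hqu]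
  refine ⟨u * B, hP, ?_, hqP, hpP⟩
  simpa only [star_mul, hP.star_eq, hq.star_eq] using congrArg star hqP

lemma exists_invertibleUpTo_of_mul_eq_one (hp : IsProjectionElem p) {c d : A}
    (hcd : c * d = 1) : ∃ q, IsProjectionElem q ∧ MvNSubEquiv p q ∧ InvertibleUpTo d p q := by
  set x := d * (1 - p)
  have hcx : c * x = 1 - p := by rw [← mul_assoc, hcd, one_mul]
  have hx : x * (1 - p) = x := by rw [mul_assoc, hp.one_sub.2]
  obtain ⟨B, hBx, hP, -⟩ := hp.one_sub.exists_mul_eq_isProjectionElem_mvnEquiv hcx hx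
  refine ⟨1 - x * B, hP.one_sub, ?_, B, ?_⟩
  · refine hp.mvnSubEquiv_of_mul_eq (t := p * c * (1 - x * B)) (u := (1 - x * B) * d * p)
      hP.one_sub.1 ?_ (by rw [mul_assoc, hp.2]) (by rw [← mul_assoc, ← mul_assoc, hP.one_sub.2])
    calc p * c * (1 - x * B) * ((1 - x * B) * d * p)
        = p * c * ((1 - x * B) * (1 - x * B)) * d * p := by simp only [mul_assoc]
      _ = p * (c * d) * p - p * (c * x) * (B * d * p) := by rw [hP.one_sub.2]; noncomm_ring
      _ = p := by rw [hcd, hcx, hp.mul_one_sub, mul_one, hp.2, zero_mul, sub_zero]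
  · have hcorner : (1 - (1 - x * B)) * d * (1 - p) = x := by
      rw [sub_sub_cancel, mul_assoc, mul_assoc, hBx, hx]
    rw [hcorner, sub_sub_cancel]
    exact ⟨rfl, hBx⟩

end IsProjectionElem

namespace InvertibleUpTo

lemma of_mul_one_sub_eq {a d p q : A} (h : InvertibleUpTo d p q)
    (hda : d * (1 - p) = a * (1 - p)) : InvertibleUpTo a p q := by
  obtain ⟨b, h₁, h₂⟩ := h
  refine ⟨b, ?_, ?_⟩ <;> rwa [mul_assoc (1 - q) a, ← hda, ← mul_assoc (1 - q) d]

lemma exists_mul_add_star_eq_one {a p q v : A} (h : InvertibleUpTo a p q)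
    (hp : IsProjectionElem p) (hvp : v * star v = p) (hv : IsProjectionElem (star v * v))
    (hq : q * (star v * v) = star v * v) : ∃ c, c * (a * (1 - p) + star v) = 1 := by
  obtain ⟨b, -, hb⟩ := h
  have hv' := hv.mul_star_mul_self
  have hpv : (1 - p) * v = 0 := by rw [sub_mul, one_mul, ← hvp, mul_assoc, hv', sub_self]
  have hqv : (1 - q) * star v = 0 := by
    have hsv : star v * v * star v = star v := by
      simpa only [star_mul, star_star, mul_assoc] using congrArg star hv'
    rw [← hsv, ← mul_assoc, sub_mul, one_mul, hq, sub_self, zero_mul]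
  set n := v * a * (1 - p)
  have hnn : n * n = 0 := by
    simp only [n, mul_assoc]
    rw [← mul_assoc (1 - p) v, hpv, zero_mul, mul_zero, mul_zero]
  have hinv : ((1 - p) * b * (1 - q) + v) * (a * (1 - p) + star v) = 1 + n :=
    calc ((1 - p) * b * (1 - q) + v) * (a * (1 - p) + star v)
        = (1 - p) * (b * ((1 - q) * a * (1 - p))) + (1 - p) * b * ((1 - q) * star v)
          + n + v * star v := by simp only [n]; noncomm_ring
      _ = 1 + n := by rw [hb, hp.one_sub.2, hqv, hvp, mul_zero, add_zero]; abel
  refine ⟨(1 - n) * ((1 - p) * b * (1 - q) + v), ?_⟩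
  rw [mul_assoc, hinv]
  calc (1 - n) * (1 + n) = 1 - n * n := by noncomm_ring
    _ = 1 := by rw [hnn, sub_zero]

end InvertibleUpTo

lemma exists_mul_add_eq_one_of_norm_mul_lt_one {R : Type*} [NormedRing R]
    [HasSummableGeomSeries R] {b c g : R} (hcb : c * b = 1) (hcg : ‖c * g‖ < 1) :
    ∃ c', c' * (b + g) = 1 := by
  obtain ⟨u, hu⟩ := isUnit_one_sub_of_norm_lt_one (x := -(c * g)) (by rwa [norm_neg])
  refine ⟨↑u⁻¹ * c, ?_⟩
  rw [mul_assoc, mul_add, hcb, ← sub_neg_eq_add, ← hu, Units.inv_mul]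

namespace FiniteTypeIdeal

lemma sub_mem_s11 (F : FiniteTypeIdeal A) {a b : A} (ha : a ∈ F.carrier) (hb : b ∈ F.carrier) :
    a - b ∈ F.carrier := by
  simpa only [neg_one_smul, ← sub_eq_add_neg] using F.add_mem ha (F.smul_mem (-1) hb)

lemma exists_isProjectionElem_mul_add_mul_one_sub_eq_one (F : FiniteTypeIdeal A) {b c f : A}
    (hcb : c * b = 1) (hf : f ∈ F.carrier) :
    ∃ p ∈ F.carrier, IsProjectionElem p ∧ ∃ c', c' * (b + f * (1 - p)) = 1 := by
  obtain ⟨p, hpF, hp, hfp, -⟩ := F.approx_unit hf (‖c‖ + 1)⁻¹ (by positivity)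
  refine ⟨p, hpF, hp, exists_mul_add_eq_one_of_norm_mul_lt_one hcb ?_⟩
  calc ‖c * (f * (1 - p))‖ ≤ ‖c‖ * ‖f * p - f‖ := by
        rw [mul_sub, mul_one, norm_sub_rev]; exact norm_mul_le _ _
    _ ≤ ‖c‖ * (‖c‖ + 1)⁻¹ := by gcongr
    _ < 1 := by rw [← div_eq_mul_inv, div_lt_one (by positivity)]; linarith

end FiniteTypeIdeal

/-- Proposition 17(1) of [BJMA]: `a` is an upper semi-Weyl type element iff
`a = b + f` with `b` left invertible and `f` of finite type. -/
theorem upperSemiWeyl_iff_leftInvertible_plus_finite (F : FiniteTypeIdeal A) (a : A) :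
    UpperSemiWeyl F a ↔
      ∃ b f : A, (∃ c : A, c * b = 1) ∧ f ∈ F.carrier ∧ a = b + f := by
  constructor
  · rintro ⟨p, q, hp, -, hpF, ⟨-, hv, -, hqv, v, hvp, rfl⟩, hinv⟩
    have hvF : star v ∈ F.carrier := by
      simpa only [← hvp, mul_assoc, hv.mul_star_mul_self] using F.star_mem (F.mul_mem_right v hpF)
    exact ⟨a * (1 - p) + star v, a * p - star v, hinv.exists_mul_add_star_eq_one hp hvp hv hqv,
      F.sub_mem_s11 (F.mul_mem_left a hpF) hvF, by noncomm_ring⟩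
  · rintro ⟨b, f, ⟨c, hcb⟩, hf, rfl⟩
    obtain ⟨p, hpF, hp, c', hc'⟩ := F.exists_isProjectionElem_mul_add_mul_one_sub_eq_one hcb hf
    obtain ⟨q, hq, hpq, hinv⟩ := hp.exists_invertibleUpTo_of_mul_eq_one hc'
    refine ⟨p, q, hp, hq, hpF, hpq, hinv.of_mul_one_sub_eq ?_⟩
    rw [add_mul, add_mul, mul_assoc f, hp.one_sub.2]
end

section
/- The set of upper semi-Weyl type elements KΦ₊⁻(A) is invariant under perturbation by finite type elements: if a ∈ KΦ₊⁻(A) and k ∈ F, then a + k ∈ KΦ₊⁻(A). -/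
variable {A : Type*}

variable [CStarAlgebra A]

/-!
Write `a = L + K` with `K ∈ F` and `L = a (1 - p) + v*` left invertible, where `v` implements
`p ⪯ q`. For a projection `e ∈ F` with `K' e ≈ K'`, where `K' = K + k`, the element
`L' = a + k - K' e` is a small perturbation of `L`, hence still left invertible, and it agrees
with `a + k` on `1 - e`. Any left invertible `L'` is invertible up to `(e, 1 - r)`, where `r` is
the range projection of `L' (1 - e)`; moreover `(1 - r) L' e` is left invertible in the corner
`e A e` (with left inverse `e Y` for `Y L' = 1`), so its polar decomposition gives `e ⪯ 1 - r`.
-/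

open CFC

lemma IsProjectionElem.isStarProjection {p : A} (hp : IsProjectionElem p) :
    IsStarProjection p :=
  ⟨hp.2, hp.1⟩

lemma IsStarProjection.isProjectionElem {p : A} (hp : IsStarProjection p) :
    IsProjectionElem p :=
  ⟨hp.2, hp.1⟩

lemma mul_star_mul_self_of_isIdempotentElem {x : A} (hx : IsIdempotentElem (star x * x)) :
    x * (star x * x) = x := by
  set P := star x * x
  have hd : star (x * P - x) * (x * P - x) = 0 := calc
    _ = P * P * P - P * P - P * P + P := by
      simp only [P, star_sub, star_mul, star_star]; noncomm_ring
    _ = 0 := by rw [hx.eq, hx.eq]; abel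
  exact sub_eq_zero.mp ((CStarRing.star_mul_self_eq_zero_iff _).mp hd)

lemma MvNEquiv.isProjectionElem_right {p q : A} (hp : IsProjectionElem p) (h : MvNEquiv p q) :
    IsProjectionElem q := by
  obtain ⟨v, hvv, rfl⟩ := h
  have hv : star v * (v * star v) = star v := by
    simpa using mul_star_mul_self_of_isIdempotentElem (x := star v)
      (by rw [star_star, hvv]; exact hp.2)
  refine ⟨IsSelfAdjoint.star_mul_self v, ?_⟩
  rw [← mul_assoc, mul_assoc (star v), hv]

lemma InvertibleUpTo.add_mul {a p q : A} (x : A) (hp : IsIdempotentElem p)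
    (h : InvertibleUpTo a p q) : InvertibleUpTo (a + x * p) p q := by
  have hx : (1 - q) * (a + x * p) * (1 - p) = (1 - q) * a * (1 - p) := by
    rw [mul_assoc, _root_.add_mul, mul_assoc x, hp.mul_one_sub_self, mul_zero, add_zero,
      ← mul_assoc]
  simpa only [InvertibleUpTo, hx] using h

lemma FiniteTypeIdeal.sub_mem_s13 (F : FiniteTypeIdeal A) {a b : A} (ha : a ∈ F.carrier)
    (hb : b ∈ F.carrier) : a - b ∈ F.carrier := by
  simpa [sub_eq_add_neg] using F.add_mem ha (F.smul_mem (-1) hb)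

theorem exists_leftInverse_add_of_norm_mul_lt {R : Type*} [NormedRing R]
    [HasSummableGeomSeries R] {x y k : R} (hyx : y * x = 1) (hk : ‖y * k‖ < 1) :
    ∃ y' : R, y' * (x + k) = 1 := by
  let u := Units.oneSub (-(y * k)) (by rwa [norm_neg])
  refine ⟨↑u⁻¹ * y, ?_⟩
  have hu : (u : R) = y * (x + k) := by simp [u, mul_add, hyx]
  rw [mul_assoc, ← hu, Units.inv_mul]

lemma isStrictlyPositive_star_mul_self_add_one_sub [PartialOrder A] [StarOrderedRing A]
    {f z β : A} (hf : IsProjectionElem f) (hβz : β * z = f) :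
    IsStrictlyPositive (star z * z + (1 - f)) := by
  set C : ℝ := ‖β‖ ^ 2 + 1
  have hC : 0 < C := by positivity
  have hf_le : f ≤ C • (star z * z) := calc
    f = star (β * z) * (β * z) := by rw [hβz, hf.1.star_eq, hf.2]
    _ = star z * (star β * β) * z := by rw [star_mul]; noncomm_ring
    _ ≤ star z * algebraMap ℝ A (‖β‖ ^ 2) * z :=
      star_left_conjugate_le_conjugate CStarAlgebra.star_mul_le_algebraMap_norm_sq z
    _ = ‖β‖ ^ 2 • (star z * z) := by
      rw [Algebra.algebraMap_eq_smul_one, mul_smul_comm, mul_one, smul_mul_assoc]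
    _ ≤ C • (star z * z) :=
      smul_le_smul_of_nonneg_right (by linarith) (star_mul_self_nonneg z)
  have h1f_le : 1 - f ≤ C • (1 - f) :=
    le_smul_of_one_le_left hf.isStarProjection.one_sub.nonneg (by simp [C])
  have hCT : IsStrictlyPositive (C • (star z * z + (1 - f))) := by
    refine isStrictlyPositive_one.of_le ?_
    calc (1 : A) = f + (1 - f) := by abel
      _ ≤ _ := by rw [smul_add]; exact add_le_add hf_le h1f_le
  simpa [smul_smul, hC.ne'] using hCT.smul (inv_pos.mpr hC)

/-- `z * c` is the range projection of `z`; the equivalence with `f` comes from the polar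
decomposition of `z`. -/
theorem exists_mvNEquiv_mul_of_leftInverse {f z β : A} (hf : IsProjectionElem f)
    (hzf : z * f = z) (hβz : β * z = f) : ∃ c : A, c * z = f ∧ MvNEquiv f (z * c) := by
  let := CStarAlgebra.spectralOrder A
  have := CStarAlgebra.spectralOrderedRing A
  set T := star z * z + (1 - f)
  have hT : IsStrictlyPositive T := isStrictlyPositive_star_mul_self_add_one_sub hf hβz
  have hTf : T * f = star z * z := by
    rw [add_mul, mul_assoc, hzf, hf.isStarProjection.one_sub_mul_self, add_zero]
  have hfT : f * T = star z * z := by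
    have hfz : f * star z = star z := by rw [← hf.1.star_eq, ← star_mul, hzf]
    rw [mul_add, ← mul_assoc, hfz, hf.isStarProjection.mul_one_sub_self, add_zero]
  set s := T ^ (-(1 / 2) : ℝ)
  have hsT : Commute s T := (Commute.refl T).cfc_nnreal _
  have hsf : Commute s f := Commute.cfc_nnreal (hTf.trans hfT.symm) _
  have hsTs : s * T * s = 1 := conjugate_rpow_neg_one_half T
  have hs : star s = s := (IsSelfAdjoint.of_nonneg rpow_nonneg).star_eq
  refine ⟨s * s * star z, ?_, star (z * s), ?_, ?_⟩
  · calc s * s * star z * z = s * s * (T * f) := by rw [hTf, mul_assoc]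
      _ = s * (s * T) * f := by noncomm_ring
      _ = s * (T * s) * f := by rw [← hsT.eq]
      _ = s * T * s * f := by noncomm_ring
      _ = f := by rw [hsTs, one_mul]
  · calc star (z * s) * star (star (z * s)) = s * (T * f) * s := by
          rw [star_star, star_mul, hs, hTf]; noncomm_ring
      _ = f := by rw [← mul_assoc, mul_assoc _ f, ← hsf.eq, ← mul_assoc, hsTs, one_mul]
  · rw [star_star, star_mul, hs]; noncomm_ring

theorem exists_mvNSubEquiv_invertibleUpTo_of_leftInverse {e L Y : A}
    (he : IsProjectionElem e) (hYL : Y * L = 1) :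
    ∃ Q : A, IsProjectionElem Q ∧ MvNSubEquiv e Q ∧ InvertibleUpTo L e Q := by
  have he' := he.isStarProjection
  set z := L * (1 - e)
  have hz : z * (1 - e) = z := by rw [mul_assoc, he'.one_sub.isIdempotentElem.eq]
  have hYz : Y * z = 1 - e := by rw [← mul_assoc, hYL, one_mul]
  obtain ⟨c, hcz, hzc⟩ :=
    exists_mvNEquiv_mul_of_leftInverse he'.one_sub.isProjectionElem hz hYz
  set r := z * c
  have hr := hzc.isProjectionElem_right he'.one_sub.isProjectionElem
  have hrz : r * z = z := by rw [mul_assoc, hcz, hz]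
  have hQ := hr.isStarProjection.one_sub
  set W := (1 - r) * (L * e)
  have hWe : W * e = W := by rw [mul_assoc, mul_assoc, he.2]
  have heYW : e * Y * W = e := by
    have hYr : Y * r = (1 - e) * c := by rw [← mul_assoc, hYz]
    calc e * Y * W = e * (Y * L) * e - e * (Y * r) * (L * e) := by
          simp only [W]; noncomm_ring
      _ = e := by
        rw [hYL, hYr, mul_one, he.2, ← mul_assoc e, he'.mul_one_sub_self, zero_mul, zero_mul,
          sub_zero]
  obtain ⟨c', -, hWc'⟩ := exists_mvNEquiv_mul_of_leftInverse he hWe heYW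
  have hr' := hWc'.isProjectionElem_right he
  have hQr' : (1 - r) * (W * c') = W * c' := by
    rw [← mul_assoc, ← mul_assoc, hQ.isIdempotentElem.eq]
  have hr'Q : W * c' * (1 - r) = W * c' := by
    simpa [hQ.isSelfAdjoint.star_eq, hr'.1.star_eq] using congrArg star hQr'
  refine ⟨1 - r, hQ.isProjectionElem, ⟨W * c', hr', hr'Q, hQr', hWc'⟩, c, ?_, ?_⟩
  · rw [sub_sub_cancel, mul_assoc r, hrz]
  · rw [sub_sub_cancel, mul_assoc r, hrz, hcz]

theorem UpperSemiWeyl.exists_eq_leftInvertible_add {F : FiniteTypeIdeal A} {a : A}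
    (ha : UpperSemiWeyl F a) : ∃ L K y : A, y * L = 1 ∧ K ∈ F.carrier ∧ a = L + K := by
  obtain ⟨p, q, hp, -, hpF, ⟨p', -, -, hqp', v, hvv, hvp'⟩, b, -, hb⟩ := ha
  have hvp : star v * p = star v := by
    simpa [hvv] using mul_star_mul_self_of_isIdempotentElem (x := star v)
      (by rw [star_star, hvv]; exact hp.2)
  have hqv : (1 - q) * star v = 0 := calc
    (1 - q) * star v = (1 - q) * p' * star v := by
      rw [← hvp', mul_assoc, mul_assoc (star v), hvv, hvp]
    _ = 0 := by rw [sub_mul, hqp', one_mul, sub_self, zero_mul]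
  set w := a * (1 - p)
  set m := b * (1 - q)
  have hw : w * (1 - p) = w := by
    rw [mul_assoc, hp.isStarProjection.one_sub.isIdempotentElem.eq]
  have hmw : m * w = 1 - p := by simp only [m, w, mul_assoc] at hb ⊢; exact hb
  have hmv : m * star v = 0 := by rw [mul_assoc, hqv, mul_zero]
  refine ⟨w + star v, a * p - star v, m + v - v * w * m, ?_,
    F.sub_mem_s13 (F.mul_mem_left a hpF) (hvp ▸ F.mul_mem_left _ hpF),
    by simp only [w]; noncomm_ring⟩
  calc (m + v - v * w * m) * (w + star v)
      = m * w + m * star v + v * star v + v * w - v * w * (m * w) - v * w * (m * star v) := by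
        noncomm_ring
    _ = 1 := by rw [hmw, hmv, hvv, mul_assoc v w, hw, mul_zero]; abel

/-- The set of upper semi-Weyl type elements is invariant under perturbations
by finite type elements. -/
theorem upperSemiWeyl_add_finite (F : FiniteTypeIdeal A) (a k : A)
    (ha : UpperSemiWeyl F a) (hk : k ∈ F.carrier) : UpperSemiWeyl F (a + k) := by
  obtain ⟨L, K, y, hyL, hKF, rfl⟩ := ha.exists_eq_leftInvertible_add
  rw [add_assoc]
  set K' := K + k
  obtain ⟨e, heF, he, hKe, -⟩ :=
    F.approx_unit (F.add_mem hKF hk) (‖y‖ + 1)⁻¹ (by positivity)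
  have hsmall : ‖y * (K' - K' * e)‖ < 1 := calc
    ‖y * (K' - K' * e)‖ ≤ ‖y‖ * ‖K' * e - K'‖ := by
      rw [norm_sub_rev]; exact norm_mul_le _ _
    _ ≤ ‖y‖ * (‖y‖ + 1)⁻¹ := by gcongr
    _ < 1 := by rw [mul_inv_lt_iff₀ (by positivity)]; linarith
  obtain ⟨Y, hY⟩ := exists_leftInverse_add_of_norm_mul_lt hyL hsmall
  obtain ⟨Q, hQ, heQ, hinv⟩ := exists_mvNSubEquiv_invertibleUpTo_of_leftInverse he hY
  have hsplit : L + K' = L + (K' - K' * e) + K' * e := by abel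
  exact ⟨e, Q, he, hQ, heF, heQ, hsplit ▸ hinv.add_mul K' he.2⟩
end
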